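/- arXiv:1605.09061 — 10 statements merged into one kernel-verified Lean document; each statement's English description precedes it below -/
import Mathlib

section
/- Let Σ = {0,1} and let X ⊆ Σ^{m,n} be a non-overlapping set. Then all pictures in X have the same tuple of corner symbols, and this common tuple corners(p) = (p(1,1), p(1,n), p(m,1), p(m,n)) is one of (0,0,1,1), (1,1,0,0), (1,0,1,0), (0,1,0,1). -/
namespace Neno

variable {α : Type*}

/-- Block of size (h,k) is a tl-prefix of `p` and a br-prefix of `q`. -/
def TlAt (m n : ℕ) (p q : Fin m → Fin n → α) (h k : ℕ) : Prop :=
  1 ≤ h ∧ h ≤ m ∧ 1 ≤ k ∧ k ≤ n ∧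
  ∀ (i j : ℕ), i < h → j < k →
    ∀ (hi : i < m) (hj : j < n) (hi' : m - h + i < m) (hj' : n - k + j < n),
      p ⟨i, hi⟩ ⟨j, hj⟩ = q ⟨m - h + i, hi'⟩ ⟨n - k + j, hj'⟩

/-- Block of size (h,k) is a bl-prefix of `p` and a tr-prefix of `q`. -/
def BlAt (m n : ℕ) (p q : Fin m → Fin n → α) (h k : ℕ) : Prop :=
  1 ≤ h ∧ h ≤ m ∧ 1 ≤ k ∧ k ≤ n ∧
  ∀ (i j : ℕ), i < h → j < k →
    ∀ (hi' : m - h + i < m) (hj : j < n) (hi : i < m) (hj' : n - k + j < n),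
      p ⟨m - h + i, hi'⟩ ⟨j, hj⟩ = q ⟨i, hi⟩ ⟨n - k + j, hj'⟩

def OvAt (m n : ℕ) (p q : Fin m → Fin n → α) (h k : ℕ) : Prop :=
  TlAt m n p q h k ∨ TlAt m n q p h k ∨ BlAt m n p q h k ∨ BlAt m n q p h k

def Overlap (m n : ℕ) (p q : Fin m → Fin n → α) : Prop := ∃ h k, OvAt m n p q h k

def ProperOverlap (m n : ℕ) (p q : Fin m → Fin n → α) : Prop :=
  ∃ h k, (h < m ∨ k < n) ∧ OvAt m n p q h k

def FrameOverlap (m n : ℕ) (p q : Fin m → Fin n → α) : Prop :=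
  ∃ h k, (h = 1 ∨ k = 1) ∧ OvAt m n p q h k

def NonOverlapping (m n : ℕ) (X : Set (Fin m → Fin n → α)) : Prop :=
  ∀ p ∈ X, ∀ q ∈ X, ¬ ProperOverlap m n p q

def Unbordered (m n : ℕ) (p : Fin m → Fin n → α) : Prop := ¬ ProperOverlap m n p p

def FrameComplete (m n : ℕ) (X : Set (Fin m → Fin n → α)) : Prop :=
  (∀ p ∈ X, ∀ q ∈ X, ¬ FrameOverlap m n p q) ∧
  (∀ p, p ∉ X → ∃ q ∈ X, FrameOverlap m n p q)

/-- The prefix of length ℓ of `s` equals the suffix of length ℓ of `t`. -/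
def SOvAt (n : ℕ) (s t : Fin n → α) (ℓ : ℕ) : Prop :=
  1 ≤ ℓ ∧ ℓ ≤ n ∧ ∀ (i : ℕ), i < ℓ →
    ∀ (hi : i < n) (hi' : n - ℓ + i < n), s ⟨i, hi⟩ = t ⟨n - ℓ + i, hi'⟩

def SOverlap (n : ℕ) (s t : Fin n → α) : Prop := ∃ ℓ, SOvAt n s t ℓ ∨ SOvAt n t s ℓ

def CrossNonOverlapping (n : ℕ) (S T : Set (Fin n → α)) : Prop :=
  ∀ s ∈ S, ∀ t ∈ T, ¬ SOverlap n s t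

def Full (n : ℕ) (S T : Set (Fin n → α)) : Prop :=
  ∀ s : Fin n → α, s ∉ S ∪ T →
    (∃ s₁ ∈ S, SOverlap n s s₁) ∧ (∃ s₂ ∈ T, SOverlap n s s₂)

def firstRow (m n : ℕ) (hm : 0 < m) (p : Fin m → Fin n → α) : Fin n → α :=
  fun j => p ⟨0, hm⟩ j

def lastRow (m n : ℕ) (hm : 0 < m) (p : Fin m → Fin n → α) : Fin n → α :=
  fun j => p ⟨m - 1, Nat.sub_lt hm Nat.one_pos⟩ j

def firstCol (m n : ℕ) (hn : 0 < n) (p : Fin m → Fin n → α) : Fin m → α :=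
  fun i => p i ⟨0, hn⟩

def lastCol (m n : ℕ) (hn : 0 < n) (p : Fin m → Fin n → α) : Fin m → α :=
  fun i => p i ⟨n - 1, Nat.sub_lt hn Nat.one_pos⟩

/-- `s` has the suffix 110^k. -/
def HasSuffix110 (m : ℕ) (s : Fin m → Bool) (k : ℕ) : Prop :=
  k + 2 ≤ m ∧
  (∀ h : m - k - 2 < m, s ⟨m - k - 2, h⟩ = true) ∧
  (∀ h : m - k - 1 < m, s ⟨m - k - 1, h⟩ = true) ∧
  (∀ j, m - k ≤ j → ∀ hj : j < m, s ⟨j, hj⟩ = false)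

def allOnes (n : ℕ) : Fin n → Bool := fun _ => true

/-- The string 110^{m-2}. -/
def oneOneZeros (m : ℕ) : Fin m → Bool := fun i => decide (i.val < 2)

/-- S₂ = 0 Σ^{n-2} 0. -/
def S2 (n : ℕ) : Set (Fin n → Bool) :=
  {s | (∀ h : 0 < n, s ⟨0, h⟩ = false) ∧ (∀ h : n - 1 < n, s ⟨n - 1, h⟩ = false)}

/-- S₄ = 1w0 with w ≠ 0^{m-2} and no suffix in 110⁺. -/
def S4 (m : ℕ) : Set (Fin m → Bool) :=
  {s | (∀ h : 0 < m, s ⟨0, h⟩ = true) ∧ (∀ h : m - 1 < m, s ⟨m - 1, h⟩ = false) ∧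
       (∃ i, ∃ hi : i < m, 1 ≤ i ∧ i < m - 1 ∧ s ⟨i, hi⟩ = true) ∧
       ¬ ∃ k, 1 ≤ k ∧ HasSuffix110 m s k}

def XSet (m n : ℕ) : Set (Fin m → Fin n → Bool) :=
  {p | (∀ h : 0 < m, ∀ j, p ⟨0, h⟩ j = allOnes n j) ∧
       (∀ h : 0 < m, (fun j => p ⟨m - 1, Nat.sub_lt h Nat.one_pos⟩ j) ∈ S2 n) ∧
       (∀ h : 0 < n, ∀ i, p i ⟨0, h⟩ = oneOneZeros m i) ∧
       (∀ h : 0 < n, (fun i => p i ⟨n - 1, Nat.sub_lt h Nat.one_pos⟩) ∈ S4 m)}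

/-- Violation of condition 1: some column j (1-indexed 2..n) has all of rows 2..m-1 equal 0. -/
def Cond1Viol (m n : ℕ) (p : Fin m → Fin n → Bool) : Prop :=
  ∃ j, ∃ hj : j < n, 1 ≤ j ∧
    ∀ i, 1 ≤ i → i < m - 1 → ∀ hi : i < m, p ⟨i, hi⟩ ⟨j, hj⟩ = false

/-- Violation of condition 2 (0-indexed positions). -/
def Cond2Viol (m n : ℕ) (p : Fin m → Fin n → Bool) : Prop :=
  ∃ i j, ∃ hi : i < m, ∃ hj : j < n, ¬(i = 0 ∧ j = 0) ∧
    (∀ j', j ≤ j' → ∀ hj' : j' < n, p ⟨i, hi⟩ ⟨j', hj'⟩ = true) ∧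
    (∃ hi1 : i + 1 < m, p ⟨i + 1, hi1⟩ ⟨j, hj⟩ = true) ∧
    (∀ l, i + 2 ≤ l → ∀ hl : l < m, p ⟨l, hl⟩ ⟨j, hj⟩ = false)

def YSet (m n : ℕ) : Set (Fin m → Fin n → Bool) :=
  {p | p ∈ XSet m n ∧ ¬ Cond1Viol m n p ∧ ¬ Cond2Viol m n p}

/-- I(m) = 1ya, y ≠ 0^{m-2}, no suffix in 110*. -/
def ISet (m : ℕ) : Set (Fin m → Bool) :=
  {s | (∀ h : 0 < m, s ⟨0, h⟩ = true) ∧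
       (∃ i, ∃ hi : i < m, 1 ≤ i ∧ i < m - 1 ∧ s ⟨i, hi⟩ = true) ∧
       ¬ ∃ k, HasSuffix110 m s k}

/-- L(m) = 1x0, x ≠ 0^{m-2}, no suffix in 110*. -/
def LSet (m : ℕ) : Set (Fin m → Bool) :=
  {s | (∀ h : 0 < m, s ⟨0, h⟩ = true) ∧ (∀ h : m - 1 < m, s ⟨m - 1, h⟩ = false) ∧
       (∃ i, ∃ hi : i < m, 1 ≤ i ∧ i < m - 1 ∧ s ⟨i, hi⟩ = true) ∧
       ¬ ∃ k, HasSuffix110 m s k}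

def ZSet (m n : ℕ) : Set (Fin m → Fin n → Bool) :=
  {p | (∀ h : 0 < m, ∀ j, p ⟨0, h⟩ j = true) ∧
       (∀ h : 0 < n, ∀ i, p i ⟨0, h⟩ = oneOneZeros m i) ∧
       (∀ j, 1 ≤ j → j < n - 1 → ∀ hj : j < n, (fun i => p i ⟨j, hj⟩) ∈ ISet m) ∧
       (∀ h : 0 < n, (fun i => p i ⟨n - 1, Nat.sub_lt h Nat.one_pos⟩) ∈ LSet m)}


lemma tl11 (m n : ℕ) (hm : 2 ≤ m) (hn : 2 ≤ n) (p q : Fin m → Fin n → Bool)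
    (h : p ⟨0, Nat.zero_lt_two.trans_le hm⟩ ⟨0, Nat.zero_lt_two.trans_le hn⟩ = q ⟨m - 1, Nat.sub_lt (Nat.zero_lt_two.trans_le hm) Nat.one_pos⟩ ⟨n - 1, Nat.sub_lt (Nat.zero_lt_two.trans_le hn) Nat.one_pos⟩) :
    ProperOverlap m n p q := by
  refine ⟨1, 1, Or.inl (by omega),
    Or.inl ⟨le_refl 1, by omega, le_refl 1, by omega, ?_⟩⟩
  intro i j hi1 hj1 hi hj hi' hj'
  interval_cases i
  interval_cases j
  convert h using 3 <;> omega

lemma bl11 (m n : ℕ) (hm : 2 ≤ m) (hn : 2 ≤ n) (p q : Fin m → Fin n → Bool)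
    (h : p ⟨m - 1, Nat.sub_lt (Nat.zero_lt_two.trans_le hm) Nat.one_pos⟩ ⟨0, Nat.zero_lt_two.trans_le hn⟩ = q ⟨0, Nat.zero_lt_two.trans_le hm⟩ ⟨n - 1, Nat.sub_lt (Nat.zero_lt_two.trans_le hn) Nat.one_pos⟩) :
    ProperOverlap m n p q := by
  refine ⟨1, 1, Or.inl (by omega),
    Or.inr (Or.inr (Or.inl ⟨le_refl 1, by omega, le_refl 1, by omega, ?_⟩))⟩
  intro i j hi1 hj1 hi' hj hi hj'
  interval_cases i
  interval_cases j
  convert h using 3 <;> omega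

/-- In a binary non-overlapping set, all pictures carry the same corner tuple,
which is one of the four listed tuples (0 = false, 1 = true). -/
theorem stmt2 (m n : ℕ) (hm : 2 ≤ m) (hn : 2 ≤ n)
    (X : Set (Fin m → Fin n → Bool)) (hX : NonOverlapping m n X) :
    ∃ c ∈ ({(false, false, true, true), (true, true, false, false),
            (true, false, true, false), (false, true, false, true)} :
            Set (Bool × Bool × Bool × Bool)),
      ∀ p ∈ X,
        (p ⟨0, by omega⟩ ⟨0, by omega⟩, p ⟨0, by omega⟩ ⟨n - 1, by omega⟩,
         p ⟨m - 1, by omega⟩ ⟨0, by omega⟩, p ⟨m - 1, by omega⟩ ⟨n - 1, by omega⟩) = c := by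
  by_cases hne : ∃ p, p ∈ X
  · obtain ⟨p₀, hp₀⟩ := hne
    have bool3 : ∀ x y z : Bool, x ≠ z → y ≠ z → x = y := by decide
    have bool2 : ∀ x y : Bool, x ≠ y → y = !x := by decide
    obtain ⟨a, ha⟩ : ∃ a, p₀ ⟨0, by omega⟩ ⟨0, by omega⟩ = a := ⟨_, rfl⟩
    obtain ⟨c, hc⟩ : ∃ c, p₀ ⟨m - 1, by omega⟩ ⟨0, by omega⟩ = c := ⟨_, rfl⟩
    have key : ∀ p ∈ X, ∀ q ∈ X,
        p ⟨0, by omega⟩ ⟨0, by omega⟩ ≠ q ⟨m - 1, by omega⟩ ⟨n - 1, by omega⟩ ∧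
        p ⟨m - 1, by omega⟩ ⟨0, by omega⟩ ≠ q ⟨0, by omega⟩ ⟨n - 1, by omega⟩ := by
      intro p hp q hq
      exact ⟨fun h => hX p hp q hq (tl11 m n hm hn p q h),
             fun h => hX p hp q hq (bl11 m n hm hn p q h)⟩
    refine ⟨(a, !c, c, !a), ?_, ?_⟩
    · cases a <;> cases c <;> simp
    · intro p hp
      have h1 := (key p hp p₀ hp₀).1
      have h2 := (key p hp p₀ hp₀).2
      have h3 := (key p₀ hp₀ p hp).1
      have h4 := (key p₀ hp₀ p hp).2
      have h5 := (key p hp p hp).1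
      have h6 := (key p hp p hp).2
      have h0a := (key p₀ hp₀ p₀ hp₀).1
      have h0c := (key p₀ hp₀ p₀ hp₀).2
      have e1 : p ⟨0, by omega⟩ ⟨0, by omega⟩ = a :=
        ha ▸ bool3 _ _ _ h1 h0a
      have e2 : p ⟨m - 1, by omega⟩ ⟨0, by omega⟩ = c :=
        hc ▸ bool3 _ _ _ h2 h0c
      have e4 : p ⟨m - 1, by omega⟩ ⟨n - 1, by omega⟩ = !a := by
        rw [← e1]; exact bool2 _ _ h5
      have e3 : p ⟨0, by omega⟩ ⟨n - 1, by omega⟩ = !c := by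
        rw [← e2]; exact bool2 _ _ h6
      rw [e1, e2, e3, e4]
  · push_neg at hne
    exact ⟨(false, false, true, true), by simp, fun p hp => absurd hp (hne p)⟩

end Neno
end

section
/- Over Σ = {0,1}, the pair (S₁, S₂) with S₁ = {1^n} and S₂ = {0w0 : w ∈ {0,1}^{n-2}} is full: for every s ∈ Σ^n with s ∉ S₁ ∪ S₂, there exist s₁ ∈ S₁ and s₂ ∈ S₂ such that s overlaps s₁ and s overlaps s₂. -/
namespace Neno

variable {α : Type*}

/-- (S₁, S₂) with S₁ = {1^n}, S₂ = 0Σ^{n-2}0 is full. -/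
theorem stmt4 (n : ℕ) (hn : 2 ≤ n) :
    Full n ({allOnes n} : Set (Fin n → Bool)) (S2 n) := by
  intro s hs
  have hn0 : 0 < n := by omega
  simp only [Set.mem_union, Set.mem_singleton_iff] at hs
  push_neg at hs
  obtain ⟨hs1, hs2⟩ := hs
  constructor
  · refine ⟨allOnes n, rfl, ?_⟩
    have h : s ⟨0, hn0⟩ = true ∨ s ⟨n - 1, by omega⟩ = true := by
      by_contra h
      push_neg at h
      exact hs2 ⟨fun _ => by simpa using h.1, fun _ => by simpa using h.2⟩
    rcases h with h | h
    · refine ⟨1, Or.inl ⟨le_refl 1, by omega, fun i hi hi' hi'' => ?_⟩⟩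
      interval_cases i
      simp [allOnes, h]
    · refine ⟨1, Or.inr ⟨le_refl 1, by omega, fun i hi hi' hi'' => ?_⟩⟩
      interval_cases i
      simpa [allOnes] using h
  · by_cases hlast : s ⟨n - 1, by omega⟩ = false
    · refine ⟨fun _ => false, ⟨fun _ => rfl, fun _ => rfl⟩, 1,
        Or.inr ⟨le_refl 1, by omega, fun i hi hi' hi'' => ?_⟩⟩
      interval_cases i
      simpa using hlast.symm
    · -- s ends in 1, but s ≠ 1^n so there is a zero at position i < n-1
      have hzero : ∃ k : Fin n, s k = false := by
        by_contra h
        push_neg at h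
        exact hs1 (funext fun k => by
          simpa [allOnes] using h k)
      obtain ⟨k, hk⟩ := hzero
      have hkne : k.val ≠ n - 1 := by
        intro heq
        apply hlast
        rw [← hk]
        congr 1
        exact Fin.ext heq.symm
      have hklt : k.val < n - 1 := by
        have := k.isLt; omega
      set ℓ := k.val + 1 with hℓ
      have hℓn : ℓ ≤ n - 1 := by omega
      refine ⟨fun j => if h : n - ℓ ≤ j.val then s ⟨j.val - (n - ℓ), by omega⟩ else false,
        ⟨fun _ => ?_, fun _ => ?_⟩, ℓ, Or.inl ⟨by omega, by omega, fun i hi hi' hi'' => ?_⟩⟩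
      · simp only
        rw [dif_neg (by omega)]
      · simp only
        rw [dif_pos (by omega)]
        rw [← hk]
        congr 1
        exact Fin.ext (by simp only []; omega)
      · simp only
        rw [dif_pos (by omega)]
        congr 1
        exact Fin.ext (by simp only []; omega)

end Neno
end

section
/- Over Σ = {0,1}, with S₃ = {110^{m-2}} and S₄ = {1w0 : |w| = m-2, w ≠ 0^{m-2}, and 1w0 has no suffix in 110⁺}, the pair (S₃, S₄) is cross-non-overlapping. -/
namespace Neno

variable {α : Type*}

/-- (S₃, S₄) with S₃ = {110^{m-2}} is cross-non-overlapping. -/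
theorem stmt5 (m : ℕ) (hm : 4 ≤ m) :
    CrossNonOverlapping m ({oneOneZeros m} : Set (Fin m → Bool)) (S4 m) := by
  intro s hs t ht hov
  rw [Set.mem_singleton_iff] at hs
  subst hs
  obtain ⟨h0, hlast, hint, hsuf⟩ := ht
  have tcongr : ∀ (a b : ℕ) (ha : a < m) (hb : b < m), a = b → t ⟨a, ha⟩ = t ⟨b, hb⟩ := by
    intro a b ha hb h; subst h; rfl
  obtain ⟨ℓ, ⟨hℓ1, hℓm, h3⟩ | ⟨hℓ1, hℓm, h3⟩⟩ := hov
  · by_cases hℓ3 : 3 ≤ ℓ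
    · apply hsuf
      refine ⟨ℓ - 2, by omega, by omega, ?_, ?_, ?_⟩
      · intro h
        have h1 := (h3 0 (by omega) (by omega) (by omega)).symm
        simp only [oneOneZeros, Nat.zero_lt_succ, decide_true] at h1
        rw [tcongr _ (m - ℓ + 0) h (by omega) (by omega)]
        exact h1
      · intro h
        have h1 := (h3 1 (by omega) (by omega) (by omega)).symm
        simp only [oneOneZeros] at h1
        rw [tcongr _ (m - ℓ + 1) h (by omega) (by omega)]
        simpa using h1
      · intro j hj hjm
        have h1 := (h3 (j - (m - ℓ)) (by omega) (by omega) (by omega)).symm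
        simp only [oneOneZeros] at h1
        rw [tcongr _ (m - ℓ + (j - (m - ℓ))) hjm (by omega) (by omega)]
        rw [h1]
        simp only [decide_eq_false_iff_not]
        omega
    · -- ℓ = 1 or 2 : last char of t would be 1
      have h1 := h3 (ℓ - 1) (by omega) (by omega) (by omega)
      have h2 := hlast (by omega)
      rw [tcongr _ (m - 1) (by omega) (by omega) (by omega)] at h1
      rw [h2] at h1
      simp only [oneOneZeros, decide_eq_false_iff_not] at h1
      omega
  · -- prefix of t = suffix of s
    have ht0 : m - ℓ < 2 := by
      have h1 := (h3 0 (by omega) (by omega) (by omega)).symm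
      rw [h0 (by omega)] at h1
      simp only [oneOneZeros, decide_eq_true_eq] at h1
      omega
    by_cases hℓm1 : ℓ = m
    · apply hsuf
      refine ⟨m - 2, by omega, by omega, ?_, ?_, ?_⟩
      · intro h
        rw [h3 (m - (m - 2) - 2) (by omega) h (by omega)]
        simp only [oneOneZeros, decide_eq_true_eq]; omega
      · intro h
        rw [h3 (m - (m - 2) - 1) (by omega) h (by omega)]
        simp only [oneOneZeros, decide_eq_true_eq]; omega
      · intro j hj hjm
        rw [h3 j (by omega) hjm (by omega)]
        simp only [oneOneZeros, decide_eq_false_iff_not]; omega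
    · obtain ⟨i, hi, h1i, h2i, hti⟩ := hint
      have h1 := h3 i (by omega) hi (by omega)
      rw [hti] at h1
      replace h1 := h1.symm
      simp only [oneOneZeros, decide_eq_true_eq] at h1
      omega

end Neno
end

section
/- Over Σ = {0,1}, with S₃ = {110^{m-2}} and S₄ = {1w0 : |w| = m-2, w ≠ 0^{m-2}, and 1w0 has no suffix in 110⁺}, the pair (S₃, S₄) is full: every string s ∈ Σ^m not in S₃ ∪ S₄ overlaps the string 110^{m-2} and also overlaps some string of S₄. -/
namespace Neno

variable {α : Type*}

/-- The string 1 0^{m-3} 1 0, an element of S₄. -/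
def uS4 (m : ℕ) : Fin m → Bool := fun i => decide (i.val = 0 ∨ i.val = m - 2)

lemma uS4_mem (m : ℕ) (hm : 4 ≤ m) : uS4 m ∈ S4 m := by
  refine ⟨?_, ?_, ?_, ?_⟩
  · intro h; simp [uS4]
  · intro h; simp [uS4]; omega
  · exact ⟨m - 2, by omega, by omega, by omega, by simp [uS4]⟩
  · rintro ⟨k, hk1, hk2, h2, h1, h0⟩
    have hb := h1 (by omega)
    simp [uS4] at hb
    rcases hb with hb | hb
    · omega
    · have ha := h2 (by omega)
      simp [uS4] at ha
      omega

lemma app_congr {m : ℕ} (s : Fin m → Bool) {a b : ℕ} (hab : a = b) (ha : a < m)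
    (hb : b < m) : s ⟨a, ha⟩ = s ⟨b, hb⟩ := by subst hab; rfl

/-- (S₃, S₄) with S₃ = {110^{m-2}} is full. -/
theorem stmt6 (m : ℕ) (hm : 4 ≤ m) :
    Full m ({oneOneZeros m} : Set (Fin m → Bool)) (S4 m) := by
  have hm0 : 0 < m := by omega
  have hmm : m - 1 < m := by omega
  intro s hs
  simp only [Set.mem_union, Set.mem_singleton_iff, not_or] at hs
  obtain ⟨hne, hs4⟩ := hs
  have key : SOverlap m s (oneOneZeros m) ∧ SOverlap m s (uS4 m) := by
    by_cases h0 : s ⟨0, hm0⟩ = true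
    · by_cases hl : s ⟨m - 1, hmm⟩ = true
      · -- s ends with 1 : prefix "1" of t (resp. u) is a suffix of s
        constructor
        · refine ⟨1, Or.inr ⟨le_refl 1, by omega, ?_⟩⟩
          intro i hi hia hib
          have hi0 : i = 0 := by omega
          subst hi0
          have h1 : oneOneZeros m ⟨0, hia⟩ = true := by simp [oneOneZeros]
          rw [h1, app_congr s (show m - 1 + 0 = m - 1 by omega) hib hmm, hl]
        · refine ⟨1, Or.inr ⟨le_refl 1, by omega, ?_⟩⟩
          intro i hi hia hib
          have hi0 : i = 0 := by omega
          subst hi0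
          have h1 : uS4 m ⟨0, hia⟩ = true := by simp [uS4]
          rw [h1, app_congr s (show m - 1 + 0 = m - 1 by omega) hib hmm, hl]
      · -- s starts with 1, ends with 0
        replace hl : s ⟨m - 1, hmm⟩ = false := by
          cases hb : s ⟨m - 1, hmm⟩ <;> simp_all
        by_cases h110 : ∃ k, 1 ≤ k ∧ HasSuffix110 m s k
        · obtain ⟨k, hk1, hk2, hA, hB, hC⟩ := h110
          have hkm : k ≤ m - 3 := by
            by_contra hbig
            have hkeq : k = m - 2 := by omega
            apply hne
            funext i
            simp only [oneOneZeros]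
            rcases Nat.lt_or_ge i.val 2 with hi2 | hi2
            · rcases Nat.lt_or_ge i.val 1 with hi1 | hi1
              · have : i = ⟨0, hm0⟩ := by
                  apply Fin.ext; simp; omega
                rw [this, h0]; simp
              · have : i = (⟨m - k - 1, by omega⟩ : Fin m) := by
                  apply Fin.ext; simp; omega
                rw [this, hB (by omega)]; simp; omega
            · have := hC i.val (by omega) i.isLt
              simp only [Fin.eta] at this
              rw [this]; simp; omega
          constructor
          · -- prefix 110^k of t = suffix of s, ℓ = k + 2
            refine ⟨k + 2, Or.inr ⟨by omega, hk2, ?_⟩⟩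
            intro i hi hia hib
            rcases Nat.lt_or_ge i 2 with hi2 | hi2
            · rcases Nat.lt_or_ge i 1 with hi1 | hi1
              · have hi0 : i = 0 := by omega
                subst hi0
                have h1 : oneOneZeros m ⟨0, hia⟩ = true := by simp [oneOneZeros]
                rw [h1, app_congr s (show m - (k + 2) + 0 = m - k - 2 by omega) hib (by omega),
                  hA (by omega)]
              · have hi1' : i = 1 := by omega
                subst hi1'
                have h1 : oneOneZeros m ⟨1, hia⟩ = true := by simp [oneOneZeros]
                rw [h1, app_congr s (show m - (k + 2) + 1 = m - k - 1 by omega) hib (by omega),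
                  hB (by omega)]
            · have h1 : oneOneZeros m ⟨i, hia⟩ = false := by simp [oneOneZeros]; omega
              rw [h1, hC (m - (k + 2) + i) (by omega) hib]
          · -- prefix 1 0^k of u = suffix of s, ℓ = k + 1
            refine ⟨k + 1, Or.inr ⟨by omega, by omega, ?_⟩⟩
            intro i hi hia hib
            rcases Nat.lt_or_ge i 1 with hi1 | hi1
            · have hi0 : i = 0 := by omega
              subst hi0
              have h1 : uS4 m ⟨0, hia⟩ = true := by simp [uS4]
              rw [h1, app_congr s (show m - (k + 1) + 0 = m - k - 1 by omega) hib (by omega),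
                hB (by omega)]
            · have h1 : uS4 m ⟨i, hia⟩ = false := by simp [uS4]; omega
              rw [h1, hC (m - (k + 1) + i) (by omega) hib]
        · -- s = 1 0^{m-1}
          have hmid : ∀ i, 1 ≤ i → i < m - 1 → ∀ hi : i < m, s ⟨i, hi⟩ = false := by
            by_contra hcon
            push_neg at hcon
            obtain ⟨i, hi1, hi2, hi, hval⟩ := hcon
            exact hs4 ⟨fun _ => h0, fun _ => hl,
              ⟨i, hi, hi1, hi2, by cases hb : s ⟨i, hi⟩ <;> simp_all⟩, h110⟩
          constructor
          · -- prefix 1 0^{m-2} of s = suffix of t, ℓ = m - 1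
            refine ⟨m - 1, Or.inl ⟨by omega, by omega, ?_⟩⟩
            intro i hi hia hib
            rcases Nat.lt_or_ge i 1 with hi1 | hi1
            · have hi0 : i = 0 := by omega
              subst hi0
              rw [app_congr s rfl hia hm0, h0]
              simp [oneOneZeros]; omega
            · rw [hmid i hi1 (by omega) hia]
              simp [oneOneZeros]; omega
          · -- prefix "10" of s = suffix "10" of u, ℓ = 2
            refine ⟨2, Or.inl ⟨by omega, by omega, ?_⟩⟩
            intro i hi hia hib
            rcases Nat.lt_or_ge i 1 with hi1 | hi1
            · have hi0 : i = 0 := by omega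
              subst hi0
              rw [app_congr s rfl hia hm0, h0]
              simp [uS4]
            · have hi1' : i = 1 := by omega
              subst hi1'
              rw [hmid 1 le_rfl (by omega) hia]
              simp [uS4]
    · -- s starts with 0 : suffix "0" of t (resp. u) is a prefix of s
      replace h0 : s ⟨0, hm0⟩ = false := by
        cases hb : s ⟨0, hm0⟩ <;> simp_all
      constructor
      · refine ⟨1, Or.inl ⟨le_refl 1, by omega, ?_⟩⟩
        intro i hi hia hib
        have hi0 : i = 0 := by omega
        subst hi0
        rw [app_congr s rfl hia hm0, h0]
        simp [oneOneZeros]; omega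
      · refine ⟨1, Or.inl ⟨le_refl 1, by omega, ?_⟩⟩
        intro i hi hia hib
        have hi0 : i = 0 := by omega
        subst hi0
        rw [app_congr s rfl hia hm0, h0]
        simp [uS4]; omega
  exact ⟨⟨oneOneZeros m, rfl, key.1⟩, ⟨uS4 m, uS4_mem m hm, key.2⟩⟩

end Neno
end

section
/- Let (S₁, S₂, S₃, S₄) be a frame-compatible quadruple of string languages with S₁, S₂ ⊆ Σ^n, S₃, S₄ ⊆ Σ^m. If the pairs (S₁, S₂) and (S₃, S₄) are both cross-non-overlapping and full, then the set X of all pictures p ∈ Σ^{m,n} whose frame (first row, last row, first column, last column) lies in S₁ × S₂ × S₃ × S₄ is frame-complete. -/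
namespace Neno

variable {α : Type*}

lemma sOverlap_symm' {n : ℕ} {s t : Fin n → α} (h : SOverlap n s t) : SOverlap n t s := by
  obtain ⟨ℓ, h | h⟩ := h
  · exact ⟨ℓ, Or.inr h⟩
  · exact ⟨ℓ, Or.inl h⟩

lemma frameOverlap_symm' {m n : ℕ} {p q : Fin m → Fin n → α} (h : FrameOverlap m n p q) :
    FrameOverlap m n q p := by
  obtain ⟨h', k, hk, hov⟩ := h
  refine ⟨h', k, hk, ?_⟩
  rcases hov with h1 | h1 | h1 | h1
  · exact Or.inr (Or.inl h1)
  · exact Or.inl h1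
  · exact Or.inr (Or.inr (Or.inr h1))
  · exact Or.inr (Or.inr (Or.inl h1))

lemma sOvAt_full' {n : ℕ} (hn : 0 < n) (s : Fin n → α) : SOvAt n s s n := by
  refine ⟨hn, le_refl _, ?_⟩
  intro i hi h1 h2
  congr 1
  exact Fin.ext (by simp)

lemma tlAt_row {m n : ℕ} (hm : 0 < m) {p q : Fin m → Fin n → α} {k : ℕ}
    (h : TlAt m n p q 1 k) : SOvAt n (firstRow m n hm p) (lastRow m n hm q) k := by
  obtain ⟨_, _, h3, h4, h5⟩ := h
  refine ⟨h3, h4, ?_⟩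
  intro j hj hjn hj'
  have := h5 0 j Nat.one_pos hj hm hjn (by omega) hj'
  simpa [firstRow, lastRow] using this

lemma row_tlAt {m n : ℕ} (hm : 0 < m) {p q : Fin m → Fin n → α} {k : ℕ}
    (h : SOvAt n (firstRow m n hm p) (lastRow m n hm q) k) : TlAt m n p q 1 k := by
  obtain ⟨h3, h4, h5⟩ := h
  refine ⟨le_refl 1, hm, h3, h4, ?_⟩
  intro i j hi hj hin hjn hi' hj'
  have hi0 : i = 0 := by omega
  subst hi0
  have := h5 j hj hjn hj'
  simpa [firstRow, lastRow] using this

lemma blAt_row {m n : ℕ} (hm : 0 < m) {p q : Fin m → Fin n → α} {k : ℕ}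
    (h : BlAt m n p q 1 k) : SOvAt n (lastRow m n hm p) (firstRow m n hm q) k := by
  obtain ⟨_, _, h3, h4, h5⟩ := h
  refine ⟨h3, h4, ?_⟩
  intro j hj hjn hj'
  have := h5 0 j Nat.one_pos hj (by omega) hjn hm hj'
  simpa [firstRow, lastRow] using this

lemma row_blAt {m n : ℕ} (hm : 0 < m) {p q : Fin m → Fin n → α} {k : ℕ}
    (h : SOvAt n (lastRow m n hm p) (firstRow m n hm q) k) : BlAt m n p q 1 k := by
  obtain ⟨h3, h4, h5⟩ := h
  refine ⟨le_refl 1, hm, h3, h4, ?_⟩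
  intro i j hi hj hin hjn hi' hj'
  have hi0 : i = 0 := by omega
  subst hi0
  have := h5 j hj hjn hj'
  simpa [firstRow, lastRow] using this

lemma tlAt_col {m n : ℕ} (hn : 0 < n) {p q : Fin m → Fin n → α} {h : ℕ}
    (hh : TlAt m n p q h 1) : SOvAt m (firstCol m n hn p) (lastCol m n hn q) h := by
  obtain ⟨h1, h2, _, _, h5⟩ := hh
  refine ⟨h1, h2, ?_⟩
  intro i hi him hi'
  have := h5 i 0 hi Nat.one_pos him hn hi' (by omega)
  simpa [firstCol, lastCol] using this

lemma col_tlAt {m n : ℕ} (hn : 0 < n) {p q : Fin m → Fin n → α} {h : ℕ}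
    (hh : SOvAt m (firstCol m n hn p) (lastCol m n hn q) h) : TlAt m n p q h 1 := by
  obtain ⟨h1, h2, h5⟩ := hh
  refine ⟨h1, h2, le_refl 1, hn, ?_⟩
  intro i j hi hj him hjn hi' hj'
  have hj0 : j = 0 := by omega
  subst hj0
  have := h5 i hi him hi'
  simpa [firstCol, lastCol] using this

lemma blAt_col {m n : ℕ} (hn : 0 < n) {p q : Fin m → Fin n → α} {h : ℕ}
    (hh : BlAt m n p q h 1) : SOvAt m (lastCol m n hn q) (firstCol m n hn p) h := by
  obtain ⟨h1, h2, _, _, h5⟩ := hh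
  refine ⟨h1, h2, ?_⟩
  intro i hi him hi'
  have := h5 i 0 hi Nat.one_pos hi' hn him (by omega)
  simpa [firstCol, lastCol] using this.symm

lemma col_blAt {m n : ℕ} (hn : 0 < n) {p q : Fin m → Fin n → α} {h : ℕ}
    (hh : SOvAt m (lastCol m n hn q) (firstCol m n hn p) h) : BlAt m n p q h 1 := by
  obtain ⟨h1, h2, h5⟩ := hh
  refine ⟨h1, h2, le_refl 1, hn, ?_⟩
  intro i j hi hj hi' hjn him hj'
  have hj0 : j = 0 := by omega
  subst hj0
  have := h5 i hi him hi'
  simpa [firstCol, lastCol] using this.symm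

lemma key_row {m n : ℕ} (hm : 0 < m) {p q : Fin m → Fin n → α}
    (h : SOverlap n (firstRow m n hm p) (lastRow m n hm q)) : FrameOverlap m n p q := by
  obtain ⟨ℓ, h | h⟩ := h
  · exact ⟨1, ℓ, Or.inl rfl, Or.inl (row_tlAt hm h)⟩
  · exact ⟨1, ℓ, Or.inl rfl, Or.inr (Or.inr (Or.inr (row_blAt hm h)))⟩

lemma key_col {m n : ℕ} (hn : 0 < n) {p q : Fin m → Fin n → α}
    (h : SOverlap m (firstCol m n hn p) (lastCol m n hn q)) : FrameOverlap m n p q := by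
  obtain ⟨ℓ, h | h⟩ := h
  · exact ⟨ℓ, 1, Or.inr rfl, Or.inl (col_tlAt hn h)⟩
  · exact ⟨ℓ, 1, Or.inr rfl, Or.inr (Or.inr (Or.inl (col_blAt hn h)))⟩

/-- If (S₁,S₂,S₃,S₄) is frame-compatible and both pairs are cross-non-overlapping
and full, then the set of all pictures with frame in S₁ × S₂ × S₃ × S₄ is
frame-complete. -/
theorem stmt7 {α : Type*} (m n : ℕ) (hm : 0 < m) (hn : 0 < n)
    (S₁ S₂ : Set (Fin n → α)) (S₃ S₄ : Set (Fin m → α))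
    (hcompat : ∃ X' : Set (Fin m → Fin n → α),
      firstRow m n hm '' X' = S₁ ∧ lastRow m n hm '' X' = S₂ ∧
      firstCol m n hn '' X' = S₃ ∧ lastCol m n hn '' X' = S₄)
    (h12 : CrossNonOverlapping n S₁ S₂) (h12f : Full n S₁ S₂)
    (h34 : CrossNonOverlapping m S₃ S₄) (h34f : Full m S₃ S₄) :
    FrameComplete m n
      {p | firstRow m n hm p ∈ S₁ ∧ lastRow m n hm p ∈ S₂ ∧
           firstCol m n hn p ∈ S₃ ∧ lastCol m n hn p ∈ S₄} := by
  obtain ⟨X', hX1, hX2, hX3, hX4⟩ := hcompat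
  have hsub : ∀ r ∈ X', firstRow m n hm r ∈ S₁ ∧ lastRow m n hm r ∈ S₂ ∧
      firstCol m n hn r ∈ S₃ ∧ lastCol m n hn r ∈ S₄ := by
    intro r hr
    exact ⟨hX1 ▸ Set.mem_image_of_mem _ hr, hX2 ▸ Set.mem_image_of_mem _ hr,
      hX3 ▸ Set.mem_image_of_mem _ hr, hX4 ▸ Set.mem_image_of_mem _ hr⟩
  constructor
  · rintro p ⟨hp1, hp2, hp3, hp4⟩ q ⟨hq1, hq2, hq3, hq4⟩ ⟨h, k, hhk, hov⟩
    rcases hhk with rfl | rfl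
    · rcases hov with h1 | h1 | h1 | h1
      · exact h12 _ hp1 _ hq2 ⟨k, Or.inl (tlAt_row hm h1)⟩
      · exact h12 _ hq1 _ hp2 ⟨k, Or.inl (tlAt_row hm h1)⟩
      · exact h12 _ hq1 _ hp2 ⟨k, Or.inr (blAt_row hm h1)⟩
      · exact h12 _ hp1 _ hq2 ⟨k, Or.inr (blAt_row hm h1)⟩
    · rcases hov with h1 | h1 | h1 | h1
      · exact h34 _ hp3 _ hq4 ⟨h, Or.inl (tlAt_col hn h1)⟩
      · exact h34 _ hq3 _ hp4 ⟨h, Or.inl (tlAt_col hn h1)⟩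
      · exact h34 _ hp3 _ hq4 ⟨h, Or.inr (blAt_col hn h1)⟩
      · exact h34 _ hq3 _ hp4 ⟨h, Or.inr (blAt_col hn h1)⟩
  · intro p hp
    by_cases h1 : firstRow m n hm p ∈ S₁
    · by_cases h2 : lastRow m n hm p ∈ S₂
      · by_cases h3 : firstCol m n hn p ∈ S₃
        · by_cases h4 : lastCol m n hn p ∈ S₄
          · exact absurd ⟨h1, h2, h3, h4⟩ hp
          · -- lastCol p ∉ S₄
            have : ∃ t ∈ S₃, SOverlap m (lastCol m n hn p) t := by
              by_cases hmem : lastCol m n hn p ∈ S₃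
              · exact ⟨_, hmem, ⟨m, Or.inl (sOvAt_full' hm _)⟩⟩
              · obtain ⟨⟨t, ht, hov⟩, _⟩ := h34f (lastCol m n hn p) (by rw [Set.mem_union]; push_neg; exact ⟨hmem, h4⟩)
                exact ⟨t, ht, hov⟩
            obtain ⟨t, ht, hov⟩ := this
            rw [← hX3] at ht
            obtain ⟨q, hqX', hq⟩ := ht
            refine ⟨q, hsub q hqX', frameOverlap_symm' (key_col hn ?_)⟩
            rw [hq]
            exact sOverlap_symm' hov
        · -- firstCol p ∉ S₃
          have : ∃ t ∈ S₄, SOverlap m (firstCol m n hn p) t := by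
            by_cases hmem : firstCol m n hn p ∈ S₄
            · exact ⟨_, hmem, ⟨m, Or.inl (sOvAt_full' hm _)⟩⟩
            · obtain ⟨_, ⟨t, ht, hov⟩⟩ := h34f (firstCol m n hn p) (by rw [Set.mem_union]; push_neg; exact ⟨h3, hmem⟩)
              exact ⟨t, ht, hov⟩
          obtain ⟨t, ht, hov⟩ := this
          rw [← hX4] at ht
          obtain ⟨q, hqX', hq⟩ := ht
          refine ⟨q, hsub q hqX', key_col hn ?_⟩
          rw [hq]
          exact hov
      · -- lastRow p ∉ S₂
        have : ∃ t ∈ S₁, SOverlap n (lastRow m n hm p) t := by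
          by_cases hmem : lastRow m n hm p ∈ S₁
          · exact ⟨_, hmem, ⟨n, Or.inl (sOvAt_full' hn _)⟩⟩
          · obtain ⟨⟨t, ht, hov⟩, _⟩ := h12f (lastRow m n hm p) (by rw [Set.mem_union]; push_neg; exact ⟨hmem, h2⟩)
            exact ⟨t, ht, hov⟩
        obtain ⟨t, ht, hov⟩ := this
        rw [← hX1] at ht
        obtain ⟨q, hqX', hq⟩ := ht
        refine ⟨q, hsub q hqX', frameOverlap_symm' (key_row hm ?_)⟩
        rw [hq]
        exact sOverlap_symm' hov
    · -- firstRow p ∉ S₁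
      have : ∃ t ∈ S₂, SOverlap n (firstRow m n hm p) t := by
        by_cases hmem : firstRow m n hm p ∈ S₂
        · exact ⟨_, hmem, ⟨n, Or.inl (sOvAt_full' hn _)⟩⟩
        · obtain ⟨_, ⟨t, ht, hov⟩⟩ := h12f (firstRow m n hm p) (by rw [Set.mem_union]; push_neg; exact ⟨h1, hmem⟩)
          exact ⟨t, ht, hov⟩
      obtain ⟨t, ht, hov⟩ := this
      rw [← hX2] at ht
      obtain ⟨q, hqX', hq⟩ := ht
      refine ⟨q, hsub q hqX', key_row hm ?_⟩
      rw [hq]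
      exact hov

end Neno
end

section
/- Let X ⊆ Σ^{m,n} be frame-complete and Y ⊆ X satisfy: (a) frame(Y) = frame(X) (every frame tuple of a picture of X is the frame tuple of some picture of Y); (b) Y is non-overlapping; (c) every p ∈ X \ Y overlaps some q ∈ Y. Then Y is a non-expandable non-overlapping (NENO) set: Y is non-overlapping and every picture p ∈ Σ^{m,n} \ Y overlaps some q ∈ Y. -/
namespace Neno

variable {α : Type*}

lemma frame_agree {α : Type*} {m n : ℕ} (hm : 0 < m) (hn : 0 < n)
    (q q' : Fin m → Fin n → α)
    (h1 : firstRow m n hm q' = firstRow m n hm q)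
    (h2 : lastRow m n hm q' = lastRow m n hm q)
    (h3 : firstCol m n hn q' = firstCol m n hn q)
    (h4 : lastCol m n hn q' = lastCol m n hn q) :
    ∀ (i : Fin m) (j : Fin n),
      (i.val = 0 ∨ i.val = m - 1 ∨ j.val = 0 ∨ j.val = n - 1) → q' i j = q i j := by
  intro i j hij
  rcases hij with h | h | h | h
  · have hi : i = ⟨0, hm⟩ := Fin.ext h
    subst hi; exact congrFun h1 j
  · have hi : i = ⟨m - 1, Nat.sub_lt hm Nat.one_pos⟩ := Fin.ext h
    subst hi; exact congrFun h2 j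
  · have hj : j = ⟨0, hn⟩ := Fin.ext h
    subst hj; exact congrFun h3 i
  · have hj : j = ⟨n - 1, Nat.sub_lt hn Nat.one_pos⟩ := Fin.ext h
    subst hj; exact congrFun h4 i

/-- From a frame-complete set X, a subset Y with the same frame, non-overlapping,
and such that every picture of X \ Y overlaps some picture of Y, is a NENO set. -/
theorem stmt8 {α : Type*} (m n : ℕ) (hm : 0 < m) (hn : 0 < n)
    (X Y : Set (Fin m → Fin n → α))
    (hXC : FrameComplete m n X) (hYX : Y ⊆ X)
    (ha : ∀ p ∈ X, ∃ q ∈ Y,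
      firstRow m n hm q = firstRow m n hm p ∧ lastRow m n hm q = lastRow m n hm p ∧
      firstCol m n hn q = firstCol m n hn p ∧ lastCol m n hn q = lastCol m n hn p)
    (hb : NonOverlapping m n Y)
    (hc : ∀ p ∈ X, p ∉ Y → ∃ q ∈ Y, Overlap m n p q) :
    NonOverlapping m n Y ∧ ∀ p, p ∉ Y → ∃ q ∈ Y, Overlap m n p q := by
  refine ⟨hb, fun p hp => ?_⟩
  by_cases hpX : p ∈ X
  · exact hc p hpX hp
  · obtain ⟨q, hqX, h, k, hfk, hov⟩ := hXC.2 p hpX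
    obtain ⟨q', hq'Y, hfr, hlr, hfc, hlc⟩ := ha q hqX
    have FA := frame_agree hm hn q q' hfr hlr hfc hlc
    refine ⟨q', hq'Y, h, k, ?_⟩
    rcases hov with ⟨a1, a2, a3, a4, hP⟩ | ⟨a1, a2, a3, a4, hP⟩ |
      ⟨a1, a2, a3, a4, hP⟩ | ⟨a1, a2, a3, a4, hP⟩
    · refine Or.inl ⟨a1, a2, a3, a4, fun i j hih hjk hi hj hi' hj' => ?_⟩
      rw [FA ⟨m - h + i, hi'⟩ ⟨n - k + j, hj'⟩ (by simp; omega)]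
      exact hP i j hih hjk hi hj hi' hj'
    · refine Or.inr (Or.inl ⟨a1, a2, a3, a4, fun i j hih hjk hi hj hi' hj' => ?_⟩)
      rw [FA ⟨i, hi⟩ ⟨j, hj⟩ (by simp; omega)]
      exact hP i j hih hjk hi hj hi' hj'
    · refine Or.inr (Or.inr (Or.inl ⟨a1, a2, a3, a4, fun i j hih hjk hi' hj hi hj' => ?_⟩))
      rw [FA ⟨i, hi⟩ ⟨n - k + j, hj'⟩ (by simp; omega)]
      exact hP i j hih hjk hi' hj hi hj'
    · refine Or.inr (Or.inr (Or.inr ⟨a1, a2, a3, a4, fun i j hih hjk hi' hj hi hj' => ?_⟩))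
      rw [FA ⟨m - h + i, hi'⟩ ⟨j, hj⟩ (by simp; omega)]
      exact hP i j hih hjk hi' hj hi hj'

end Neno
end

section
/- For m, n ≥ 4 over Σ = {0,1}, the set X(m,n) of all pictures whose first row is 1^n, whose last row lies in 0{0,1}^{n-2}0, whose first column is 110^{m-2}, and whose last column lies in {1w0 : |w| = m-2, w ≠ 0^{m-2}, no suffix in 110⁺}, is nonempty and frame-complete. -/
namespace Neno

variable {α : Type*}

/-! ### Auxiliary material for `stmt9` -/

/-- The column witness `1 0^(m-3) 1 0`. -/
def s0 (m : ℕ) : Fin m → Bool := fun i => decide (i.val = 0 ∨ i.val = m - 2)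

/-- A picture with prescribed last row interior `r` and last column `s`,
first row all ones, first column `110^(m-2)`, interior `false`. -/
def Qpic (m n : ℕ) (r : Fin n → Bool) (s : Fin m → Bool) : Fin m → Fin n → Bool :=
  fun i j => if i.val = 0 then true
    else if j.val = 0 then decide (i.val < 2)
    else if j.val = n - 1 then s i
    else if i.val = m - 1 then r j
    else false

lemma cast2 {m n : ℕ} (p : Fin m → Fin n → Bool) {x x' y y' : ℕ}
    {hx : x < m} {hy : y < n} {hx' : x' < m} {hy' : y' < n}
    (ex : x = x') (ey : y = y') : p ⟨x, hx⟩ ⟨y, hy⟩ = p ⟨x', hx'⟩ ⟨y', hy'⟩ := by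
  subst ex; subst ey; rfl

lemma s0_mem (m : ℕ) (hm : 4 ≤ m) : s0 m ∈ S4 m := by
  refine ⟨fun h => by simp [s0], fun h => by simp [s0]; omega,
    ⟨m - 2, by omega, by omega, by omega, by simp [s0]⟩, ?_⟩
  rintro ⟨k, hk1, hk2, h2, h1, h0⟩
  have e2 := h2 (by omega)
  have e1 := h1 (by omega)
  simp [s0] at e2 e1
  omega

lemma Q_mem (m n : ℕ) (hm : 4 ≤ m) (hn : 4 ≤ n) (r : Fin n → Bool) (s : Fin m → Bool)
    (hs : s ∈ S4 m) : Qpic m n r s ∈ XSet m n := by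
  obtain ⟨hs0, hsl, hsi, hsn⟩ := hs
  refine ⟨fun h j => by simp [Qpic, allOnes], ?_, ?_, ?_⟩
  · intro h
    refine ⟨fun h' => ?_, fun h' => ?_⟩
    · have e1 : m - 1 ≠ 0 := by omega
      simp [Qpic, e1]
      omega
    · have e1 : m - 1 ≠ 0 := by omega
      have e2 : n - 1 ≠ 0 := by omega
      simp [Qpic, e1, e2]
      exact hsl (by omega)
  · intro h i
    by_cases hi : i.val = 0
    · simp [Qpic, hi, oneOneZeros]
    · simp [Qpic, hi, oneOneZeros]
  · intro h
    have he : (fun i => Qpic m n r s i ⟨n - 1, Nat.sub_lt h Nat.one_pos⟩) = s := by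
      funext i
      by_cases hi : i.val = 0
      · rw [show Qpic m n r s i ⟨n - 1, Nat.sub_lt h Nat.one_pos⟩ = true by simp [Qpic, hi]]
        rw [show s i = s ⟨0, by omega⟩ from congrArg s (Fin.ext hi)]
        exact (hs0 (by omega)).symm
      · have e2 : n - 1 ≠ 0 := by omega
        simp [Qpic, hi, e2]
    rw [he]
    exact ⟨hs0, hsl, hsi, hsn⟩

lemma no_tl {m n : ℕ} (hm : 4 ≤ m) (hn : 4 ≤ n) {a b : Fin m → Fin n → Bool}
    (ha : a ∈ XSet m n) (hb : b ∈ XSet m n) {h k : ℕ} (hhk : h = 1 ∨ k = 1) :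
    ¬ TlAt m n a b h k := by
  obtain ⟨ha1, ha2, ha3, ha4⟩ := ha
  obtain ⟨hb1, hb2, hb3, hb4⟩ := hb
  rintro ⟨hh1, hhm, hk1, hkn, heq⟩
  rcases hhk with rfl | rfl
  · -- h = 1 : first row of a vs last row of b
    have e := heq 0 (k - 1) (by omega) (by omega) (by omega) (by omega) (by omega) (by omega)
    have eA : a ⟨0, by omega⟩ ⟨k - 1, by omega⟩ = true := ha1 (by omega) _
    have eB : b ⟨m - 1, by omega⟩ ⟨n - 1, by omega⟩ = false := (hb2 (by omega)).2 (by omega)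
    have ec : b ⟨m - 1 + 0, by omega⟩ ⟨n - k + (k - 1), by omega⟩
        = b ⟨m - 1, by omega⟩ ⟨n - 1, by omega⟩ := cast2 b (by omega) (by omega)
    exact absurd (eA.symm.trans ((e.trans ec).trans eB)) (by decide)
  · -- k = 1 : first column of a vs last column of b
    have hb4' := hb4 (by omega)
    -- step 1 : h ≥ 3
    have eh3 : 3 ≤ h := by
      have e := heq (h - 1) 0 (by omega) (by omega) (by omega) (by omega) (by omega) (by omega)
      have eA : a ⟨h - 1, by omega⟩ ⟨0, by omega⟩ = oneOneZeros m ⟨h - 1, by omega⟩ :=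
        ha3 (by omega) _
      have eB : b ⟨m - 1, by omega⟩ ⟨n - 1, by omega⟩ = false := hb4'.2.1 (by omega)
      have ec : b ⟨m - h + (h - 1), by omega⟩ ⟨n - 1 + 0, by omega⟩
          = b ⟨m - 1, by omega⟩ ⟨n - 1, by omega⟩ := cast2 b (by omega) (by omega)
      have : oneOneZeros m ⟨h - 1, by omega⟩ = false := eA.symm.trans ((e.trans ec).trans eB)
      simp [oneOneZeros] at this
      omega
    -- step 2 : the last column of b has suffix 110^(h-2)
    refine hb4'.2.2.2 ⟨h - 2, by omega, by omega, ?_, ?_, ?_⟩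
    · intro hh
      have e := heq 0 0 (by omega) (by omega) (by omega) (by omega) (by omega) (by omega)
      have eA : a ⟨0, by omega⟩ ⟨0, by omega⟩ = true := ha1 (by omega) _
      have ec : b ⟨m - (h - 2) - 2, hh⟩ ⟨n - 1, by omega⟩
          = b ⟨m - h + 0, by omega⟩ ⟨n - 1 + 0, by omega⟩ := cast2 b (by omega) (by omega)
      exact ec.trans (e.symm.trans eA)
    · intro hh
      have e := heq 1 0 (by omega) (by omega) (by omega) (by omega) (by omega) (by omega)
      have eA : a ⟨1, by omega⟩ ⟨0, by omega⟩ = true := by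
        have := ha3 (by omega) ⟨1, by omega⟩
        rw [this]
        simp [oneOneZeros]
      have ec : b ⟨m - (h - 2) - 1, hh⟩ ⟨n - 1, by omega⟩
          = b ⟨m - h + 1, by omega⟩ ⟨n - 1 + 0, by omega⟩ := cast2 b (by omega) (by omega)
      exact ec.trans (e.symm.trans eA)
    · intro j hj hjm
      have hjlt : j - (m - h) < h := by omega
      have hjge : 2 ≤ j - (m - h) := by omega
      have e := heq (j - (m - h)) 0 hjlt (by omega) (by omega) (by omega) (by omega) (by omega)
      have eA : a ⟨j - (m - h), by omega⟩ ⟨0, by omega⟩ = false := by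
        have := ha3 (by omega) ⟨j - (m - h), by omega⟩
        rw [this]
        simp [oneOneZeros]
        omega
      have ec : b ⟨j, hjm⟩ ⟨n - 1, by omega⟩
          = b ⟨m - h + (j - (m - h)), by omega⟩ ⟨n - 1 + 0, by omega⟩ :=
        cast2 b (by omega) (by omega)
      exact ec.trans (e.symm.trans eA)

lemma no_bl {m n : ℕ} (hm : 4 ≤ m) (hn : 4 ≤ n) {a b : Fin m → Fin n → Bool}
    (ha : a ∈ XSet m n) (hb : b ∈ XSet m n) {h k : ℕ} (hhk : h = 1 ∨ k = 1) :
    ¬ BlAt m n a b h k := by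
  obtain ⟨ha1, ha2, ha3, ha4⟩ := ha
  obtain ⟨hb1, hb2, hb3, hb4⟩ := hb
  rintro ⟨hh1, hhm, hk1, hkn, heq⟩
  rcases hhk with rfl | rfl
  · -- h = 1 : last row of a vs first row of b
    have e := heq 0 0 (by omega) (by omega) (by omega) (by omega) (by omega) (by omega)
    have eA : a ⟨m - 1 + 0, by omega⟩ ⟨0, by omega⟩ = false := by
      have := ha3 (by omega) ⟨m - 1 + 0, by omega⟩
      rw [this]
      simp [oneOneZeros]
      omega
    have eB : b ⟨0, by omega⟩ ⟨n - k + 0, by omega⟩ = true := hb1 (by omega) _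
    exact absurd (eA.symm.trans (e.trans eB)) (by decide)
  · -- k = 1 : first column of a (bottom part) vs last column of b (top part)
    have hb4' := hb4 (by omega)
    have e0 := heq 0 0 (by omega) (by omega) (by omega) (by omega) (by omega) (by omega)
    have eB0 : b ⟨0, by omega⟩ ⟨n - 1 + 0, by omega⟩ = true := by
      have : b ⟨0, by omega⟩ ⟨n - 1 + 0, by omega⟩ = b ⟨0, by omega⟩ ⟨n - 1, by omega⟩ :=
        cast2 b (by omega) (by omega)
      rw [this]
      exact hb4'.1 (by omega)
    have eA0 : a ⟨m - h + 0, by omega⟩ ⟨0, by omega⟩ = oneOneZeros m ⟨m - h + 0, by omega⟩ :=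
      ha3 (by omega) _
    have hmh : m - h < 2 := by
      have : oneOneZeros m ⟨m - h + 0, by omega⟩ = true := eA0.symm.trans (e0.trans eB0)
      simp [oneOneZeros] at this
      omega
    by_cases hcase : h = m
    · -- full column: b's last column is 110^(m-2), has suffix 110^(m-2)
      refine hb4'.2.2.2 ⟨m - 2, by omega, by omega, ?_, ?_, ?_⟩
      · intro hh
        have e := heq 0 0 (by omega) (by omega) (by omega) (by omega) (by omega) (by omega)
        have eA : a ⟨m - h + 0, by omega⟩ ⟨0, by omega⟩ = true := by
          have := ha3 (by omega) ⟨m - h + 0, by omega⟩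
          rw [this]
          simp [oneOneZeros]
          all_goals omega
        have ec : b ⟨m - (m - 2) - 2, hh⟩ ⟨n - 1, by omega⟩
            = b ⟨0, by omega⟩ ⟨n - 1 + 0, by omega⟩ := cast2 b (by omega) (by omega)
        exact ec.trans (e.symm.trans eA)
      · intro hh
        have e := heq 1 0 (by omega) (by omega) (by omega) (by omega) (by omega) (by omega)
        have eA : a ⟨m - h + 1, by omega⟩ ⟨0, by omega⟩ = true := by
          have := ha3 (by omega) ⟨m - h + 1, by omega⟩
          rw [this]
          simp [oneOneZeros]
          all_goals omega
        have ec : b ⟨m - (m - 2) - 1, hh⟩ ⟨n - 1, by omega⟩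
            = b ⟨1, by omega⟩ ⟨n - 1 + 0, by omega⟩ := cast2 b (by omega) (by omega)
        exact ec.trans (e.symm.trans eA)
      · intro j hj hjm
        have e := heq j 0 (by omega) (by omega) (by omega) (by omega) (by omega) (by omega)
        have eA : a ⟨m - h + j, by omega⟩ ⟨0, by omega⟩ = false := by
          have := ha3 (by omega) ⟨m - h + j, by omega⟩
          rw [this]
          simp [oneOneZeros]
          all_goals omega
        have ec : b ⟨j, hjm⟩ ⟨n - 1, by omega⟩
            = b ⟨j, by omega⟩ ⟨n - 1 + 0, by omega⟩ := cast2 b (by omega) (by omega)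
        exact ec.trans (e.symm.trans eA)
    · -- h = m - 1 : b's last column is 1 0^(m-2) 0, no interior one
      have hh' : h = m - 1 := by omega
      subst hh'
      obtain ⟨i, hi, hi1, hi2, hival⟩ := hb4'.2.2.1
      have e := heq i 0 (by omega) (by omega) (by omega) (by omega) (by omega) (by omega)
      have eA : a ⟨m - (m - 1) + i, by omega⟩ ⟨0, by omega⟩ = false := by
        have := ha3 (by omega) ⟨m - (m - 1) + i, by omega⟩
        rw [this]
        simp [oneOneZeros]
        omega
      have ec : b ⟨i, hi⟩ ⟨n - 1, by omega⟩
          = b ⟨i, by omega⟩ ⟨n - 1 + 0, by omega⟩ := cast2 b (by omega) (by omega)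
      exact absurd ((ec.symm.trans e.symm).trans eA) (by simp [hival])

/-- The base witness picture. -/
def q0 (m n : ℕ) : Fin m → Fin n → Bool := Qpic m n (fun _ => false) (s0 m)

lemma Qpic_val {m n : ℕ} (r : Fin n → Bool) (s : Fin m → Bool) {x y : ℕ}
    (hx : x < m) (hy : y < n) :
    Qpic m n r s ⟨x, hx⟩ ⟨y, hy⟩ =
      if x = 0 then true else if y = 0 then decide (x < 2)
      else if y = n - 1 then s ⟨x, hx⟩ else if x = m - 1 then r ⟨y, hy⟩ else false := rfl

lemma q0_val {m n : ℕ} (hm : 4 ≤ m) (hn : 4 ≤ n) {x y : ℕ} (hx : x < m) (hy : y < n) :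
    q0 m n ⟨x, hx⟩ ⟨y, hy⟩ =
      decide (x = 0 ∨ (y = 0 ∧ x < 2) ∨ (y = n - 1 ∧ x = m - 2)) := by
  rw [show q0 m n = Qpic m n (fun _ => false) (s0 m) from rfl, Qpic_val]
  by_cases h1 : x = 0
  · rw [if_pos h1]
    exact (decide_eq_true (Or.inl h1)).symm
  · rw [if_neg h1]
    by_cases h2 : y = 0
    · rw [if_pos h2]
      rcases Nat.lt_or_ge x 2 with hx2 | hx2
      · rw [decide_eq_true hx2, decide_eq_true (Or.inr (Or.inl ⟨h2, hx2⟩))]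
      · rw [decide_eq_false (by omega), decide_eq_false (by omega)]
    · rw [if_neg h2]
      by_cases h3 : y = n - 1
      · rw [if_pos h3]
        rw [show s0 m ⟨x, hx⟩ = decide (x = 0 ∨ x = m - 2) from rfl]
        by_cases h4 : x = m - 2
        · rw [decide_eq_true (Or.inr h4), decide_eq_true (Or.inr (Or.inr ⟨h3, h4⟩))]
        · rw [decide_eq_false (by omega), decide_eq_false (by omega)]
      · rw [if_neg h3]
        by_cases h4 : x = m - 1
        · rw [if_pos h4]
          exact (decide_eq_false (by omega)).symm
        · rw [if_neg h4]
          exact (decide_eq_false (by omega)).symm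

/-- For m, n ≥ 4 the set X(m,n) is nonempty and frame-complete. -/
theorem stmt9 (m n : ℕ) (hm : 4 ≤ m) (hn : 4 ≤ n) :
    (XSet m n).Nonempty ∧ FrameComplete m n (XSet m n) := by
  have hq0m : q0 m n ∈ XSet m n := Q_mem m n hm hn _ _ (s0_mem m hm)
  refine ⟨⟨q0 m n, hq0m⟩, ?_, ?_⟩
  · rintro p hp q hq ⟨h, k, hhk, hov⟩
    rcases hov with ht | ht | hbl | hbl
    · exact no_tl hm hn hp hq hhk ht
    · exact no_tl hm hn hq hp hhk ht
    · exact no_bl hm hn hp hq hhk hbl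
    · exact no_bl hm hn hq hp hhk hbl
  · intro p hp
    by_cases hrow : ∃ j : Fin n, p ⟨0, by omega⟩ j = false
    · obtain ⟨j, hjf⟩ := hrow
      by_cases hj0 : j.val = 0
      · -- case 1a : TlAt p q0 1 1
        refine ⟨q0 m n, hq0m, 1, 1, Or.inl rfl,
          Or.inl ⟨le_refl 1, by omega, le_refl 1, by omega, ?_⟩⟩
        intro ii jj hii hjj hX1 hX2 hX3 hX4
        have hii0 : ii = 0 := by omega
        have hjj0 : jj = 0 := by omega
        subst hii0; subst hjj0
        have eL : p ⟨0, hX1⟩ ⟨0, hX2⟩ = false :=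
          (congrArg _ (Fin.ext hj0.symm : (⟨0, hX2⟩ : Fin n) = j)).trans hjf
        have eR : q0 m n ⟨m - 1 + 0, hX3⟩ ⟨n - 1 + 0, hX4⟩ = false :=
          (q0_val hm hn _ _).trans (decide_eq_false (by omega))
        rw [eL, eR]
      · -- case 1b : BlAt q p 1 (n - J)
        have hJ1 : 1 ≤ j.val := by omega
        have hJn : j.val < n := j.isLt
        refine ⟨Qpic m n (fun i => if hij : j.val + i.val < n then
            p ⟨0, by omega⟩ ⟨j.val + i.val, hij⟩ else false) (s0 m),
          Q_mem m n hm hn _ _ (s0_mem m hm), 1, n - j.val, Or.inl rfl,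
          Or.inr (Or.inr (Or.inr ⟨le_refl 1, by omega, by omega, by omega, ?_⟩))⟩
        intro ii jj hii hjj hX1 hX2 hX3 hX4
        have hii0 : ii = 0 := by omega
        subst hii0
        by_cases hjj0 : jj = 0
        · subst hjj0
          have eL : Qpic m n (fun i => if hij : j.val + i.val < n then
              p ⟨0, by omega⟩ ⟨j.val + i.val, hij⟩ else false) (s0 m)
              ⟨m - 1 + 0, hX1⟩ ⟨0, hX2⟩ = false := by
            rw [Qpic_val, if_neg (by omega : ¬ m - 1 + 0 = 0), if_pos rfl]
            exact decide_eq_false (by omega)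
          have hv : n - (n - j.val) + 0 = j.val := by omega
          have eR : p ⟨0, hX3⟩ ⟨n - (n - j.val) + 0, hX4⟩ = false :=
            (congrArg _ (Fin.ext hv : (⟨n - (n - j.val) + 0, hX4⟩ : Fin n) = j)).trans hjf
          rw [eL, eR]
        · have e1 : m - 1 + 0 ≠ 0 := by omega
          have e2 : jj ≠ n - 1 := by omega
          have e3 : m - 1 + 0 = m - 1 := by omega
          have e4 : j.val + jj < n := by omega
          have eL : Qpic m n (fun i => if hij : j.val + i.val < n then
              p ⟨0, by omega⟩ ⟨j.val + i.val, hij⟩ else false) (s0 m)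
              ⟨m - 1 + 0, hX1⟩ ⟨jj, hX2⟩ = p ⟨0, by omega⟩ ⟨j.val + jj, e4⟩ := by
            rw [Qpic_val, if_neg e1, if_neg hjj0, if_neg e2, if_pos e3]
            exact dif_pos e4
          rw [eL]
          exact (cast2 p rfl (by omega)).symm
    · have hrowN : ∀ (y : ℕ) (hy : y < n), p ⟨0, by omega⟩ ⟨y, hy⟩ = true := by
        intro y hy
        have := not_exists.mp hrow ⟨y, hy⟩
        simpa using this
      by_cases hA : p ⟨m - 1, by omega⟩ ⟨0, by omega⟩ = true
      · -- case 2a : BlAt p q0 1 1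
        refine ⟨q0 m n, hq0m, 1, 1, Or.inl rfl,
          Or.inr (Or.inr (Or.inl ⟨le_refl 1, by omega, le_refl 1, by omega, ?_⟩))⟩
        intro ii jj hii hjj hX1 hX2 hX3 hX4
        have hii0 : ii = 0 := by omega
        have hjj0 : jj = 0 := by omega
        subst hii0; subst hjj0
        have eL : p ⟨m - 1 + 0, hX1⟩ ⟨0, hX2⟩ = true := (cast2 p (by omega) rfl).trans hA
        have eR : q0 m n ⟨0, hX3⟩ ⟨n - 1 + 0, hX4⟩ = true :=
          (q0_val hm hn _ _).trans (decide_eq_true (Or.inl rfl))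
        rw [eL, eR]
      · by_cases hB : p ⟨m - 1, by omega⟩ ⟨n - 1, by omega⟩ = true
        · -- case 2b : TlAt q0 p 1 1
          refine ⟨q0 m n, hq0m, 1, 1, Or.inl rfl,
            Or.inr (Or.inl ⟨le_refl 1, by omega, le_refl 1, by omega, ?_⟩)⟩
          intro ii jj hii hjj hX1 hX2 hX3 hX4
          have hii0 : ii = 0 := by omega
          have hjj0 : jj = 0 := by omega
          subst hii0; subst hjj0
          have eL : q0 m n ⟨0, hX1⟩ ⟨0, hX2⟩ = true :=
            (q0_val hm hn _ _).trans (decide_eq_true (Or.inl rfl))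
          have eR : p ⟨m - 1 + 0, hX3⟩ ⟨n - 1 + 0, hX4⟩ = true :=
            (cast2 p (by omega) (by omega)).trans hB
          rw [eL, eR]
        · by_cases hfc : ∀ i : Fin m, p i ⟨0, by omega⟩ = oneOneZeros m i
          · -- first three conditions hold : last column analysis
            by_cases hsuf : ∃ k, 1 ≤ k ∧ HasSuffix110 m (fun i => p i ⟨n - 1, by omega⟩) k
            · -- case 4b : TlAt q0 p (k+2) 1
              obtain ⟨k, hk1, hk2, h2, h1, h0⟩ := hsuf
              refine ⟨q0 m n, hq0m, k + 2, 1, Or.inr rfl,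
                Or.inr (Or.inl ⟨by omega, by omega, le_refl 1, by omega, ?_⟩)⟩
              intro ii jj hii hjj hX1 hX2 hX3 hX4
              have hjj0 : jj = 0 := by omega
              subst hjj0
              by_cases h0i : ii = 0
              · subst h0i
                have eL : q0 m n ⟨0, hX1⟩ ⟨0, hX2⟩ = true :=
            (q0_val hm hn _ _).trans (decide_eq_true (Or.inl rfl))
                have eR : p ⟨m - (k + 2) + 0, hX3⟩ ⟨n - 1 + 0, hX4⟩ = true :=
                  (cast2 p (by omega) (by omega)).trans (h2 (by omega))
                rw [eL, eR]
              · by_cases h1i : ii = 1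
                · subst h1i
                  have eL : q0 m n ⟨1, hX1⟩ ⟨0, hX2⟩ = true :=
                    (q0_val hm hn _ _).trans (decide_eq_true (by omega))
                  have eR : p ⟨m - (k + 2) + 1, hX3⟩ ⟨n - 1 + 0, hX4⟩ = true :=
                    (cast2 p (by omega) (by omega)).trans (h1 (by omega))
                  rw [eL, eR]
                · have eL : q0 m n ⟨ii, hX1⟩ ⟨0, hX2⟩ = false :=
                    (q0_val hm hn _ _).trans (decide_eq_false (by omega))
                  have eR : p ⟨m - (k + 2) + ii, hX3⟩ ⟨n - 1 + 0, hX4⟩ = false :=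
                    (cast2 p rfl (by omega)).trans
                      (h0 (m - (k + 2) + ii) (by omega) (by omega))
                  rw [eL, eR]
            · by_cases hint : ∃ x, ∃ hx : x < m, 1 ≤ x ∧ x < m - 1 ∧
                  p ⟨x, hx⟩ ⟨n - 1, by omega⟩ = true
              · -- all conditions hold : contradiction with p ∉ X
                exact absurd
                  ⟨fun h j => hrowN j.val j.isLt,
                   fun h => ⟨fun h' => by simpa using hA, fun h' => by simpa using hB⟩,
                   fun h i => hfc i,
                   fun h => ⟨fun h' => hrowN (n - 1) (by omega),
                     fun h' => by simpa using hB, hint, hsuf⟩⟩ hp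
              · -- case 4a : BlAt q0 p (m-1) 1
                push_neg at hint
                refine ⟨q0 m n, hq0m, m - 1, 1, Or.inr rfl,
                  Or.inr (Or.inr (Or.inr ⟨by omega, by omega, le_refl 1, by omega, ?_⟩))⟩
                intro ii jj hii hjj hX1 hX2 hX3 hX4
                have hjj0 : jj = 0 := by omega
                subst hjj0
                by_cases h0i : ii = 0
                · subst h0i
                  have eL : q0 m n ⟨m - (m - 1) + 0, hX1⟩ ⟨0, hX2⟩ = true :=
                    (q0_val hm hn _ _).trans (decide_eq_true (by omega))
                  have eR : p ⟨0, hX3⟩ ⟨n - 1 + 0, hX4⟩ = true :=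
                    (cast2 p rfl (by omega)).trans (hrowN (n - 1) (by omega))
                  rw [eL, eR]
                · have eL : q0 m n ⟨m - (m - 1) + ii, hX1⟩ ⟨0, hX2⟩ = false :=
                    (q0_val hm hn _ _).trans (decide_eq_false (by omega))
                  have eR : p ⟨ii, hX3⟩ ⟨n - 1 + 0, hX4⟩ = false := by
                    have hne := hint ii hX3 (by omega) (by omega)
                    rcases Bool.eq_false_or_eq_true (p ⟨ii, hX3⟩ ⟨n - 1 + 0, hX4⟩) with ht | hf
                    · exfalso
                      have hc : p ⟨ii, hX3⟩ ⟨n - 1, by omega⟩ = true :=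
                        (cast2 p rfl (by omega)).symm.trans ht
                      exact hne hc
                    · exact hf
                  rw [eL, eR]
          · -- first column violated
            push_neg at hfc
            obtain ⟨i, hine⟩ := hfc
            by_cases h10 : p ⟨1, by omega⟩ ⟨0, by omega⟩ = true
            · -- case 3b
              have hineB : p ⟨i.val, i.isLt⟩ ⟨0, by omega⟩ ≠ decide (i.val < 2) := hine
              have h2le : 2 ≤ i.val := by
                by_contra hlt
                apply hineB
                have hd : decide (i.val < 2) = true := decide_eq_true (by omega)
                rw [hd]
                rcases (by omega : i.val = 0 ∨ i.val = 1) with h0v | h1v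
                · exact (cast2 p h0v rfl).trans (hrowN 0 (by omega))
                · exact (cast2 p h1v rfl).trans h10
              have hval : p ⟨i.val, i.isLt⟩ ⟨0, by omega⟩ = true := by
                have hd : decide (i.val < 2) = false := decide_eq_false (by omega)
                rcases Bool.eq_false_or_eq_true (p ⟨i.val, i.isLt⟩ ⟨0, by omega⟩) with ht | hf
                · exact ht
                · exact absurd (hf.trans hd.symm) hineB
              have hle : i.val ≤ m - 2 := by
                by_contra hgt
                exact hA ((cast2 p (by omega : i.val = m - 1) rfl).symm.trans hval)
              classical
              set P : ℕ → Prop := fun x => 2 ≤ x ∧ ∃ hx : x < m,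
                p ⟨x, hx⟩ ⟨0, by omega⟩ = true with hPdef
              have hPval : P (Nat.findGreatest P (m - 2)) :=
                Nat.findGreatest_spec hle ⟨h2le, i.isLt, hval⟩
              set i0 := Nat.findGreatest P (m - 2) with hi0def
              have hi0le : i0 ≤ m - 2 := Nat.findGreatest_le _
              obtain ⟨hi02, hi0m, hi0val⟩ := hPval
              have hmax : ∀ x, i0 < x → x ≤ m - 2 → ¬ P x :=
                fun x hx1 hx2 => Nat.findGreatest_is_greatest hx1 hx2
              refine ⟨q0 m n, hq0m, m - i0, 1, Or.inr rfl,
                Or.inr (Or.inr (Or.inl ⟨by omega, by omega, le_refl 1, by omega, ?_⟩))⟩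
              intro ii jj hii hjj hX1 hX2 hX3 hX4
              have hjj0 : jj = 0 := by omega
              subst hjj0
              by_cases h0i : ii = 0
              · subst h0i
                have eL : p ⟨m - (m - i0) + 0, hX1⟩ ⟨0, hX2⟩ = true :=
                  (cast2 p (by omega) rfl).trans hi0val
                have eR : q0 m n ⟨0, hX3⟩ ⟨n - 1 + 0, hX4⟩ = true :=
          (q0_val hm hn _ _).trans (decide_eq_true (Or.inl rfl))
                rw [eL, eR]
              · have eL : p ⟨m - (m - i0) + ii, hX1⟩ ⟨0, hX2⟩ = false := by
                  rcases Bool.eq_false_or_eq_true (p ⟨m - (m - i0) + ii, hX1⟩ ⟨0, hX2⟩)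
                    with ht | hf
                  swap
                  · exact hf
                  · exfalso
                    by_cases hend : m - (m - i0) + ii = m - 1
                    · exact hA ((cast2 p hend rfl).symm.trans ht)
                    · exact hmax (m - (m - i0) + ii) (by omega) (by omega)
                        ⟨by omega, hX1, ht⟩
                have eR : q0 m n ⟨ii, hX3⟩ ⟨n - 1 + 0, hX4⟩ = false :=
                  (q0_val hm hn _ _).trans (decide_eq_false (by omega))
                rw [eL, eR]
            · -- case 3a : TlAt p q0 2 1
              refine ⟨q0 m n, hq0m, 2, 1, Or.inr rfl,
                Or.inl ⟨by omega, by omega, le_refl 1, by omega, ?_⟩⟩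
              intro ii jj hii hjj hX1 hX2 hX3 hX4
              have hjj0 : jj = 0 := by omega
              subst hjj0
              rcases (by omega : ii = 0 ∨ ii = 1) with h0v | h1v
              · subst h0v
                have eL : p ⟨0, hX1⟩ ⟨0, hX2⟩ = true := hrowN 0 (by omega)
                have eR : q0 m n ⟨m - 2 + 0, hX3⟩ ⟨n - 1 + 0, hX4⟩ = true :=
                  (q0_val hm hn _ _).trans (decide_eq_true (by omega))
                rw [eL, eR]
              · subst h1v
                have eL : p ⟨1, hX1⟩ ⟨0, hX2⟩ = false := by simpa using h10
                have eR : q0 m n ⟨m - 2 + 1, hX3⟩ ⟨n - 1 + 0, hX4⟩ = false :=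
                  (q0_val hm hn _ _).trans (decide_eq_false (by omega))
                rw [eL, eR]

end Neno
end

section
/- For m, n ≥ 4, the set Y(m,n) is non-overlapping: no two pictures of Y(m,n) properly overlap. -/
namespace Neno

variable {α : Type*}

lemma tl_absurd (m n : ℕ) (hm : 4 ≤ m) (hn : 4 ≤ n)
    (p q : Fin m → Fin n → Bool) (hp : p ∈ YSet m n) (hq : q ∈ YSet m n)
    (h k : ℕ) (hT : TlAt m n p q h k) (hne : ¬(h = m ∧ k = n)) : False := by
  obtain ⟨h1, hhm, k1, hkn, E⟩ := hT
  obtain ⟨⟨prow0, plast, pcol0, plcol⟩, pc1, pc2⟩ := hp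
  obtain ⟨⟨qrow0, qlast, qcol0, qlcol⟩, qc1, qc2⟩ := hq
  have hm0 : 0 < m := by omega
  have hn0 : 0 < n := by omega
  have Eq' : ∀ r c, m - h ≤ r → n - k ≤ c →
      ∀ (hr : r < m) (hc : c < n) (hr' : r - (m - h) < m) (hc' : c - (n - k) < n),
      q ⟨r, hr⟩ ⟨c, hc⟩ = p ⟨r - (m - h), hr'⟩ ⟨c - (n - k), hc'⟩ := by
    intro r c hr1 hc1 hr hc hr' hc'
    have e := E (r - (m - h)) (c - (n - k)) (by omega) (by omega) hr' hc'
      (by omega) (by omega)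
    rw [e]
    have i1 : (⟨m - h + (r - (m - h)), by omega⟩ : Fin m) = ⟨r, hr⟩ :=
      Fin.ext (by simp only [Fin.val_mk]; omega)
    have i2 : (⟨n - k + (c - (n - k)), by omega⟩ : Fin n) = ⟨c, hc⟩ :=
      Fin.ext (by simp only [Fin.val_mk]; omega)
    rw [i1, i2]
  by_cases hh1 : h = 1
  · -- top row of p forces q(m-1, n-1) = 1, contradicting S2
    have e := Eq' (m - 1) (n - 1) (by omega) (by omega) (by omega) (by omega)
      (by omega) (by omega)
    have l1 : p ⟨m - 1 - (m - h), by omega⟩ ⟨n - 1 - (n - k), by omega⟩ = true := by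
      have i1 : (⟨m - 1 - (m - h), by omega⟩ : Fin m) = ⟨0, hm0⟩ :=
        Fin.ext (by simp only [Fin.val_mk]; omega)
      rw [i1]
      exact prow0 hm0 _
    have l2 : q ⟨m - 1, by omega⟩ ⟨n - 1, by omega⟩ = false := (qlast hm0).2 _
    rw [l2, l1] at e
    exact Bool.noConfusion e
  · have hh2 : 2 ≤ h := by omega
    by_cases hkn' : k = n
    · -- first columns clash
      have hhm' : h < m := by omega
      have e := Eq' (m - h + 1) 0 (by omega) (by omega) (by omega) (by omega)
        (by omega) (by omega)
      have l1 : p ⟨m - h + 1 - (m - h), by omega⟩ ⟨0 - (n - k), by omega⟩ = true := by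
        have i1 : (⟨m - h + 1 - (m - h), by omega⟩ : Fin m) = ⟨1, by omega⟩ :=
          Fin.ext (by simp only [Fin.val_mk]; omega)
        have i2 : (⟨0 - (n - k), by omega⟩ : Fin n) = ⟨0, hn0⟩ :=
          Fin.ext (by simp only [Fin.val_mk]; omega)
        rw [i1, i2, pcol0 hn0]
        rfl
      have l2 : q ⟨m - h + 1, by omega⟩ ⟨0, by omega⟩ = false := by
        rw [qcol0 hn0]
        simp [oneOneZeros]
        omega
      rw [l2, l1] at e
      exact Bool.noConfusion e
    · -- k < n : Cond2 violation for q at (m-h, n-k)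
      have hkn2 : k < n := by omega
      apply qc2
      refine ⟨m - h, n - k, by omega, by omega, by omega, ?_, ⟨by omega, ?_⟩, ?_⟩
      · intro j' hj' hj'n
        rw [Eq' (m - h) j' (by omega) (by omega) _ _ (by omega) (by omega)]
        have i1 : (⟨m - h - (m - h), by omega⟩ : Fin m) = ⟨0, hm0⟩ :=
          Fin.ext (by simp only [Fin.val_mk]; omega)
        rw [i1]
        exact prow0 hm0 _
      · rw [Eq' (m - h + 1) (n - k) (by omega) (by omega) _ _ (by omega) (by omega)]
        have i1 : (⟨m - h + 1 - (m - h), by omega⟩ : Fin m) = ⟨1, by omega⟩ :=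
          Fin.ext (by simp only [Fin.val_mk]; omega)
        have i2 : (⟨n - k - (n - k), by omega⟩ : Fin n) = ⟨0, hn0⟩ :=
          Fin.ext (by simp only [Fin.val_mk]; omega)
        rw [i1, i2, pcol0 hn0]
        rfl
      · intro l hl hlm
        rw [Eq' l (n - k) (by omega) (by omega) _ _ (by omega) (by omega)]
        have i2 : (⟨n - k - (n - k), by omega⟩ : Fin n) = ⟨0, hn0⟩ :=
          Fin.ext (by simp only [Fin.val_mk]; omega)
        rw [i2, pcol0 hn0]
        simp [oneOneZeros]
        omega

lemma bl_absurd (m n : ℕ) (hm : 4 ≤ m) (hn : 4 ≤ n)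
    (p q : Fin m → Fin n → Bool) (hp : p ∈ YSet m n) (hq : q ∈ YSet m n)
    (h k : ℕ) (hB : BlAt m n p q h k) (hne : ¬(h = m ∧ k = n)) : False := by
  obtain ⟨h1, hhm, k1, hkn, E⟩ := hB
  obtain ⟨⟨prow0, plast, pcol0, plcol⟩, pc1, pc2⟩ := hp
  obtain ⟨⟨qrow0, qlast, qcol0, qlcol⟩, qc1, qc2⟩ := hq
  have hm0 : 0 < m := by omega
  have hn0 : 0 < n := by omega
  have Eq' : ∀ r c, r < h → n - k ≤ c →
      ∀ (hr : r < m) (hc : c < n) (hr' : m - h + r < m) (hc' : c - (n - k) < n),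
      q ⟨r, hr⟩ ⟨c, hc⟩ = p ⟨m - h + r, hr'⟩ ⟨c - (n - k), hc'⟩ := by
    intro r c hr1 hc1 hr hc hr' hc'
    have e := E r (c - (n - k)) hr1 (by omega) hr' hc' hr (by omega)
    have i2 : (⟨n - k + (c - (n - k)), by omega⟩ : Fin n) = ⟨c, hc⟩ :=
      Fin.ext (by simp only [Fin.val_mk]; omega)
    rw [i2] at e
    exact e.symm
  by_cases hhc : h ≤ m - 2
  · -- q(0, n-k) would be 0 from p's first column, but q's first row is all ones
    have e := Eq' 0 (n - k) (by omega) (by omega) (by omega) (by omega)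
      (by omega) (by omega)
    have l1 : p ⟨m - h + 0, by omega⟩ ⟨n - k - (n - k), by omega⟩ = false := by
      have i2 : (⟨n - k - (n - k), by omega⟩ : Fin n) = ⟨0, hn0⟩ :=
        Fin.ext (by simp only [Fin.val_mk]; omega)
      rw [i2, pcol0 hn0]
      simp [oneOneZeros]
      omega
    have l2 : q ⟨0, by omega⟩ ⟨n - k, by omega⟩ = true := qrow0 hm0 _
    rw [l2, l1] at e
    exact Bool.noConfusion e
  · by_cases hhm' : h = m - 1
    · by_cases hkn' : k = n
      · -- q(1,0) = p(2,0) = 0 vs q's first column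
        have e := Eq' 1 0 (by omega) (by omega) (by omega) (by omega)
          (by omega) (by omega)
        have l1 : p ⟨m - h + 1, by omega⟩ ⟨0 - (n - k), by omega⟩ = false := by
          have i2 : (⟨0 - (n - k), by omega⟩ : Fin n) = ⟨0, hn0⟩ :=
            Fin.ext (by simp only [Fin.val_mk]; omega)
          rw [i2, pcol0 hn0]
          simp [oneOneZeros]
          omega
        have l2 : q ⟨1, by omega⟩ ⟨0, by omega⟩ = true := by
          rw [qcol0 hn0]
          rfl
        rw [l2, l1] at e
        exact Bool.noConfusion e
      · -- Cond1 violation for q at column n-k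
        apply qc1
        refine ⟨n - k, by omega, by omega, ?_⟩
        intro i hi1 him hi
        rw [Eq' i (n - k) (by omega) (by omega) _ _ (by omega) (by omega)]
        have i2 : (⟨n - k - (n - k), by omega⟩ : Fin n) = ⟨0, hn0⟩ :=
          Fin.ext (by simp only [Fin.val_mk]; omega)
        rw [i2, pcol0 hn0]
        simp [oneOneZeros]
        omega
    · -- h = m, so k < n : Cond2 violation for q at (0, n-k)
      have hhm2 : h = m := by omega
      have hkn2 : k < n := by omega
      apply qc2
      refine ⟨0, n - k, by omega, by omega, by omega, ?_, ⟨by omega, ?_⟩, ?_⟩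
      · intro j' hj' hj'n
        exact qrow0 hm0 _
      · rw [Eq' 1 (n - k) (by omega) (by omega) _ _ (by omega) (by omega)]
        have i1 : (⟨m - h + 1, by omega⟩ : Fin m) = ⟨1, by omega⟩ :=
          Fin.ext (by simp only [Fin.val_mk]; omega)
        have i2 : (⟨n - k - (n - k), by omega⟩ : Fin n) = ⟨0, hn0⟩ :=
          Fin.ext (by simp only [Fin.val_mk]; omega)
        rw [i1, i2, pcol0 hn0]
        rfl
      · intro l hl hlm
        rw [Eq' l (n - k) (by omega) (by omega) _ _ (by omega) (by omega)]
        have i1 : (⟨m - h + l, by omega⟩ : Fin m) = ⟨l, hlm⟩ :=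
          Fin.ext (by simp only [Fin.val_mk]; omega)
        have i2 : (⟨n - k - (n - k), by omega⟩ : Fin n) = ⟨0, hn0⟩ :=
          Fin.ext (by simp only [Fin.val_mk]; omega)
        rw [i1, i2, pcol0 hn0]
        simp [oneOneZeros]
        omega

/-- For m, n ≥ 4 the set Y(m,n) is non-overlapping. -/
theorem stmt10 (m n : ℕ) (hm : 4 ≤ m) (hn : 4 ≤ n) :
    NonOverlapping m n (YSet m n) := by
  intro p hp q hq hov
  obtain ⟨h, k, hne, hov⟩ := hov
  rcases hov with hT | hT | hB | hB
  · exact tl_absurd m n hm hn p q hp hq h k hT (by rintro ⟨rfl, rfl⟩; omega)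
  · exact tl_absurd m n hm hn q p hq hp h k hT (by rintro ⟨rfl, rfl⟩; omega)
  · exact bl_absurd m n hm hn p q hp hq h k hB (by rintro ⟨rfl, rfl⟩; omega)
  · exact bl_absurd m n hm hn q p hq hp h k hB (by rintro ⟨rfl, rfl⟩; omega)

end Neno
end

section
/- For m, n ≥ 4, frame(Y(m,n)) = frame(X(m,n)): for every picture p ∈ X(m,n) there is a picture q ∈ Y(m,n) with the same first row, last row, first column, and last column. -/
namespace Neno

variable {α : Type*}

/-- Replace the interior of `p` by a canonical fill keeping the frame. -/
def fill (m n : ℕ) (p : Fin m → Fin n → Bool) : Fin m → Fin n → Bool :=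
  fun i j =>
    if i.val = 0 ∨ i.val = m - 1 ∨ j.val = 0 ∨ j.val = n - 1 then p i j
    else if p ⟨m - 1, Nat.sub_lt i.pos Nat.one_pos⟩ j = true then decide (i.val = 1)
    else decide (i.val = m - 2)

/-- frame(Y(m,n)) = frame(X(m,n)): every picture of X has a picture of Y with
the same first row, last row, first column and last column. -/
theorem stmt11 (m n : ℕ) (hm : 4 ≤ m) (hn : 4 ≤ n) :
    ∀ p ∈ XSet m n, ∃ q ∈ YSet m n,
      firstRow m n (by omega) q = firstRow m n (by omega) p ∧
      lastRow m n (by omega) q = lastRow m n (by omega) p ∧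
      firstCol m n (by omega) q = firstCol m n (by omega) p ∧
      lastCol m n (by omega) q = lastCol m n (by omega) p := by
  intro p hp
  obtain ⟨h1, h2, h3, h4⟩ := hp
  have hm0 : 0 < m := by omega
  have hn0 : 0 < n := by omega
  have hm1 : m - 1 < m := by omega
  have hn1 : n - 1 < n := by omega
  set q := fill m n p with hqdef
  -- frame equality
  have hqf : ∀ (i : ℕ) (hi : i < m) (j : ℕ) (hj : j < n),
      (i = 0 ∨ i = m - 1 ∨ j = 0 ∨ j = n - 1) →
      q ⟨i, hi⟩ ⟨j, hj⟩ = p ⟨i, hi⟩ ⟨j, hj⟩ := by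
    intro i hi j hj h
    simp only [hqdef, fill]
    rw [if_pos h]
  -- interior value
  have hqi : ∀ (i : ℕ) (hi : i < m) (j : ℕ) (hj : j < n),
      1 ≤ i → i ≤ m - 2 → 1 ≤ j → j ≤ n - 2 →
      q ⟨i, hi⟩ ⟨j, hj⟩ =
        if p ⟨m - 1, hm1⟩ ⟨j, hj⟩ = true then decide (i = 1) else decide (i = m - 2) := by
    intro i hi j hj hi1 hi2 hj1 hj2
    simp only [hqdef, fill]
    rw [if_neg (by push_neg; refine ⟨by omega, by omega, by omega, by omega⟩)]
  -- the last column of p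
  have hS4 := h4 hn0
  obtain ⟨hs0, hslast, hsmid, hnosuf⟩ := hS4
  have hqX : q ∈ XSet m n := by
    refine ⟨?_, ?_, ?_, ?_⟩
    · intro h j
      rw [hqf 0 h j.val j.isLt (Or.inl rfl)]
      exact h1 h j
    · intro h
      have : (fun j : Fin n => q ⟨m - 1, Nat.sub_lt h Nat.one_pos⟩ j) =
          (fun j : Fin n => p ⟨m - 1, Nat.sub_lt h Nat.one_pos⟩ j) := by
        funext j
        exact hqf (m - 1) _ j.val j.isLt (Or.inr (Or.inl rfl))
      rw [this]
      exact h2 h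
    · intro h i
      rw [show (⟨0, h⟩ : Fin n) = ⟨0, h⟩ from rfl]
      rw [hqf i.val i.isLt 0 h (Or.inr (Or.inr (Or.inl rfl)))]
      exact h3 h i
    · intro h
      have : (fun i : Fin m => q i ⟨n - 1, Nat.sub_lt h Nat.one_pos⟩) =
          (fun i : Fin m => p i ⟨n - 1, Nat.sub_lt h Nat.one_pos⟩) := by
        funext i
        exact hqf i.val i.isLt (n - 1) _ (Or.inr (Or.inr (Or.inr rfl)))
      rw [this]
      exact h4 h
  refine ⟨q, ⟨hqX, ?_, ?_⟩, ?_, ?_, ?_, ?_⟩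
  · -- ¬ Cond1Viol
    rintro ⟨j, hj, hj1, hall⟩
    by_cases hjn : j = n - 1
    · obtain ⟨i, hi, hi1, hi2, hsi⟩ := hsmid
      have := hall i hi1 hi2 hi
      rw [hqf i hi j hj (Or.inr (Or.inr (Or.inr hjn)))] at this
      have hsi' : p ⟨i, hi⟩ ⟨n - 1, Nat.sub_lt hn0 Nat.one_pos⟩ = true := hsi
      have hf : p ⟨i, hi⟩ ⟨n - 1, Nat.sub_lt hn0 Nat.one_pos⟩ = false := by
        convert this using 3
        omega
      rw [hf] at hsi'
      exact absurd hsi' (by simp)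
    · have hj2 : j ≤ n - 2 := by omega
      by_cases hb : p ⟨m - 1, hm1⟩ ⟨j, hj⟩ = true
      · have := hall 1 le_rfl (by omega) (by omega)
        rw [hqi 1 (by omega) j hj le_rfl (by omega) hj1 hj2, if_pos hb] at this
        simp at this
      · have := hall (m - 2) (by omega) (by omega) (by omega)
        rw [hqi (m - 2) (by omega) j hj (by omega) le_rfl hj1 hj2, if_neg hb] at this
        simp at this
  · -- ¬ Cond2Viol
    rintro ⟨i, j, hi, hj, hne, hrow, ⟨hi1, hmid⟩, hbelow⟩
    by_cases hjl : j = n - 1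
    · -- last column: contradicts the no-110⁺-suffix condition of S4
      by_cases him : i + 1 = m - 1
      · have := hmid
        rw [hqf (i + 1) hi1 j hj (Or.inr (Or.inr (Or.inr hjl)))] at this
        have heq : p ⟨i + 1, hi1⟩ ⟨j, hj⟩ =
            p ⟨m - 1, hm1⟩ ⟨n - 1, Nat.sub_lt hn0 Nat.one_pos⟩ := by
          congr 1 <;> [exact Fin.ext him; exact Fin.ext hjl]
        have hsl : p ⟨m - 1, hm1⟩ ⟨n - 1, Nat.sub_lt hn0 Nat.one_pos⟩ = false := hslast hm1
        rw [heq, hsl] at this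
        simp at this
      · have hile : i + 1 < m - 1 := by omega
        apply hnosuf
        refine ⟨m - 2 - i, by omega, by omega, ?_, ?_, ?_⟩
        · intro h
          show p ⟨m - (m - 2 - i) - 2, h⟩ ⟨n - 1, Nat.sub_lt hn0 Nat.one_pos⟩ = true
          have := hrow j le_rfl hj
          rw [hqf i hi j hj (Or.inr (Or.inr (Or.inr hjl)))] at this
          convert this using 3 <;> omega
        · intro h
          show p ⟨m - (m - 2 - i) - 1, h⟩ ⟨n - 1, Nat.sub_lt hn0 Nat.one_pos⟩ = true
          have := hmid
          rw [hqf (i + 1) hi1 j hj (Or.inr (Or.inr (Or.inr hjl)))] at this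
          convert this using 3 <;> omega
        · intro l hl hlm
          show p ⟨l, hlm⟩ ⟨n - 1, Nat.sub_lt hn0 Nat.one_pos⟩ = false
          have hl2 : i + 2 ≤ l := by omega
          have := hbelow l hl2 hlm
          rw [hqf l hlm j hj (Or.inr (Or.inr (Or.inr hjl)))] at this
          convert this using 3
          omega
    · -- j < n - 1
      by_cases hj0 : j = 0
      · subst hj0
        have hine : i ≠ 0 := fun h => hne ⟨h, rfl⟩
        by_cases hieq : i = 1
        · have := hmid
          rw [hqf (i + 1) hi1 0 hj (Or.inr (Or.inr (Or.inl rfl)))] at this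
          rw [h3 hj ⟨i + 1, hi1⟩] at this
          simp [oneOneZeros] at this
          omega
        · have := hrow 0 le_rfl hj
          rw [hqf i hi 0 hj (Or.inr (Or.inr (Or.inl rfl)))] at this
          rw [h3 hj ⟨i, hi⟩] at this
          simp [oneOneZeros] at this
          omega
      · -- interior column 1 ≤ j ≤ n-2
        have hj1 : 1 ≤ j := by omega
        have hj2 : j ≤ n - 2 := by omega
        by_cases hi0 : i = 0
        · subst hi0
          have := hmid
          rw [hqi 1 hi1 j hj le_rfl (by omega) hj1 hj2] at this
          by_cases hb : p ⟨m - 1, hm1⟩ ⟨j, hj⟩ = true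
          · have hbot := hbelow (m - 1) (by omega) hm1
            rw [hqf (m - 1) hm1 j hj (Or.inr (Or.inl rfl))] at hbot
            rw [hbot] at hb
            simp at hb
          · rw [if_neg hb] at this
            simp at this
            omega
        · by_cases hiM : i = m - 1
          · omega
          · have hi2 : i ≤ m - 2 := by omega
            have hrow0 := hrow j le_rfl hj
            rw [hqi i hi j hj (by omega) hi2 hj1 hj2] at hrow0
            by_cases hb : p ⟨m - 1, hm1⟩ ⟨j, hj⟩ = true
            · rw [if_pos hb] at hrow0
              simp at hrow0
              -- i = 1, so i+1 = 2 is interior and must be false, contradicting hmid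
              have := hmid
              rw [hqi (i + 1) hi1 j hj (by omega) (by omega) hj1 hj2,
                if_pos hb] at this
              simp at this
              omega
            · rw [if_neg hb] at hrow0
              simp at hrow0
              -- i = m - 2, so i+1 = m-1 and the bottom entry must be true
              have := hmid
              rw [hqf (i + 1) hi1 j hj (Or.inr (Or.inl (by omega)))] at this
              have heq : p ⟨i + 1, hi1⟩ ⟨j, hj⟩ = p ⟨m - 1, hm1⟩ ⟨j, hj⟩ := by
                congr 1
                exact Fin.ext (by simp; omega)
              rw [heq] at this
              exact hb this
  · funext j
    exact hqf 0 hm0 j.val j.isLt (Or.inl rfl)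
  · funext j
    exact hqf (m - 1) _ j.val j.isLt (Or.inr (Or.inl rfl))
  · funext i
    exact hqf i.val i.isLt 0 hn0 (Or.inr (Or.inr (Or.inl rfl)))
  · funext i
    exact hqf i.val i.isLt (n - 1) _ (Or.inr (Or.inr (Or.inr rfl)))

end Neno
end

section
/- For m, n ≥ 4, every picture p ∈ X(m,n) \ Y(m,n) overlaps some picture q ∈ Y(m,n). -/
namespace Neno

variable {α : Type*}

/-! ### Auxiliary development for stmt12 -/

/-- Total (ℕ-indexed) view of a picture. -/
def pv (m n : ℕ) (p : Fin m → Fin n → Bool) (i j : ℕ) : Bool :=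
  if h : i < m ∧ j < n then p ⟨i, h.1⟩ ⟨j, h.2⟩ else false

lemma pv_spec {m n : ℕ} (p : Fin m → Fin n → Bool) {i j : ℕ} (hi : i < m) (hj : j < n) :
    p ⟨i, hi⟩ ⟨j, hj⟩ = pv m n p i j := by
  unfold pv
  rw [dif_pos ⟨hi, hj⟩]

lemma pv_eq {m n : ℕ} (p : Fin m → Fin n → Bool) (i j : ℕ) (hi : i < m) (hj : j < n) {b : Bool}
    (h : p ⟨i, hi⟩ ⟨j, hj⟩ = b) : pv m n p i j = b :=
  (pv_spec p hi hj).symm.trans h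

lemma exists_max {P : ℕ → Prop} {b : ℕ} (h : ∃ j, j < b ∧ P j) :
    ∃ J, J < b ∧ P J ∧ ∀ c, J < c → c < b → ¬ P c := by
  induction b with
  | zero => obtain ⟨j, hj, _⟩ := h; omega
  | succ b ih =>
    by_cases hb : P b
    · exact ⟨b, Nat.lt_succ_self b, hb, fun c h1 h2 => (by omega : False).elim⟩
    · obtain ⟨j, hj, hPj⟩ := h
      have hjb : j < b := by
        rcases Nat.lt_succ_iff_lt_or_eq.mp hj with h' | h'
        · exact h'
        · exact absurd (h' ▸ hPj) hb
      obtain ⟨J, h1, h2, h3⟩ := ih ⟨j, hjb, hPj⟩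
      refine ⟨J, by omega, h2, fun c hc1 hc2 => ?_⟩
      rcases (by omega : c < b ∨ c = b) with h' | h'
      · exact h3 c hc1 h'
      · exact h' ▸ hb

/-- Condition 1 violation at column `c`, in `pv` form. -/
def P1 (m n : ℕ) (p : Fin m → Fin n → Bool) (c : ℕ) : Prop :=
  1 ≤ c ∧ c < n ∧ ∀ r, 1 ≤ r → r < m - 1 → pv m n p r c = false

/-- Condition 2 violation at column `c`, in `pv` form. -/
def P2 (m n : ℕ) (p : Fin m → Fin n → Bool) (c : ℕ) : Prop :=
  ∃ i, i + 1 < m ∧ ¬(i = 0 ∧ c = 0) ∧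
    (∀ c', c ≤ c' → c' < n → pv m n p i c' = true) ∧
    pv m n p (i + 1) c = true ∧
    (∀ l, i + 2 ≤ l → l < m → pv m n p l c = false)

lemma cond1_iff {m n : ℕ} (p : Fin m → Fin n → Bool) :
    Cond1Viol m n p ↔ ∃ c, P1 m n p c := by
  constructor
  · rintro ⟨j, hj, hj1, hall⟩
    exact ⟨j, hj1, hj, fun r h1 h2 =>
      (pv_spec p (by omega) hj).symm.trans (hall r h1 h2 (by omega))⟩
  · rintro ⟨c, h1, h2, hall⟩
    exact ⟨c, h2, h1, fun i hi1 hi2 hi => (pv_spec p hi h2).trans (hall i hi1 hi2)⟩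

lemma cond2_iff {m n : ℕ} (p : Fin m → Fin n → Bool) :
    Cond2Viol m n p ↔ ∃ c, c < n ∧ P2 m n p c := by
  constructor
  · rintro ⟨i, j, hi, hj, hne, hrow, ⟨hi1, hnext⟩, hz⟩
    exact ⟨j, hj, i, hi1, hne,
      fun c' h1 h2 => (pv_spec p hi h2).symm.trans (hrow c' h1 h2),
      (pv_spec p hi1 hj).symm.trans hnext,
      fun l h1 h2 => (pv_spec p h2 hj).symm.trans (hz l h1 h2)⟩
  · rintro ⟨c, hc, i, hi1, hne, hrow, hnext, hz⟩
    exact ⟨i, c, by omega, hc, hne,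
      fun j' h1 hj' => (pv_spec p (by omega) hj').trans (hrow j' h1 hj'),
      ⟨hi1, (pv_spec p hi1 hc).trans hnext⟩,
      fun l h1 hl => (pv_spec p hl hc).trans (hz l h1 hl)⟩

/-- Picture used in case A (a Cond1 violation at column `J`). -/
def QAf (m n : ℕ) (p : Fin m → Fin n → Bool) (J i₀ r c : ℕ) : Bool :=
  if r = 0 then true
  else if c < n - J then pv m n p (r - 1) (J + c)
  else decide (r = i₀)

def QA (m n : ℕ) (p : Fin m → Fin n → Bool) (J i₀ : ℕ) : Fin m → Fin n → Bool :=
  fun r c => QAf m n p J i₀ r.val c.val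

lemma pv_QA {m n : ℕ} {p : Fin m → Fin n → Bool} {J i₀ : ℕ} (r c : ℕ)
    (hr : r < m) (hc : c < n) :
    pv m n (QA m n p J i₀) r c = QAf m n p J i₀ r c :=
  (pv_spec (QA m n p J i₀) hr hc).symm

lemma QAf_zero {m n : ℕ} {p : Fin m → Fin n → Bool} {J i₀ c : ℕ} :
    QAf m n p J i₀ 0 c = true := by simp [QAf]

lemma QAf_copy {m n : ℕ} {p : Fin m → Fin n → Bool} {J i₀ r c : ℕ}
    (hr : r ≠ 0) (hc : c < n - J) :
    QAf m n p J i₀ r c = pv m n p (r - 1) (J + c) := by simp [QAf, hr, hc]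

lemma QAf_fill {m n : ℕ} {p : Fin m → Fin n → Bool} {J i₀ r c : ℕ}
    (hr : r ≠ 0) (hc : ¬ c < n - J) :
    QAf m n p J i₀ r c = decide (r = i₀) := by simp [QAf, hr, hc]

/-- Picture used in case B (a Cond2 violation at `(i, J)`). -/
def QBf (m n : ℕ) (p : Fin m → Fin n → Bool) (i J r c : ℕ) : Bool :=
  if r < m - i ∧ c < n - J then pv m n p (i + r) (J + c)
  else if n - J ≤ c then decide (r = 0 ∨ r = 2)
  else if c = 0 then false
  else decide (r = m - i ∧ 2 ≤ i)

def QB (m n : ℕ) (p : Fin m → Fin n → Bool) (i J : ℕ) : Fin m → Fin n → Bool :=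
  fun r c => QBf m n p i J r.val c.val

lemma pv_QB {m n : ℕ} {p : Fin m → Fin n → Bool} {i J : ℕ} (r c : ℕ)
    (hr : r < m) (hc : c < n) :
    pv m n (QB m n p i J) r c = QBf m n p i J r c :=
  (pv_spec (QB m n p i J) hr hc).symm

lemma QBf_copy {m n : ℕ} {p : Fin m → Fin n → Bool} {i J r c : ℕ}
    (h1 : r < m - i) (h2 : c < n - J) :
    QBf m n p i J r c = pv m n p (i + r) (J + c) := by simp [QBf, h1, h2]

lemma QBf_last {m n : ℕ} {p : Fin m → Fin n → Bool} {i J r c : ℕ}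
    (h2 : n - J ≤ c) :
    QBf m n p i J r c = decide (r = 0 ∨ r = 2) := by
  have h : ¬ (r < m - i ∧ c < n - J) := by omega
  simp [QBf, h, h2]

lemma QBf_zero {m n : ℕ} {p : Fin m → Fin n → Bool} {i J r : ℕ}
    (h1 : ¬ r < m - i) (hJ : J < n) :
    QBf m n p i J r 0 = false := by
  have h2 : ¬ (n - J ≤ 0) := by omega
  simp [QBf, h1, h2]

lemma QBf_free {m n : ℕ} {p : Fin m → Fin n → Bool} {i J r c : ℕ}
    (h1 : ¬ r < m - i) (h2 : ¬ n - J ≤ c) (h3 : c ≠ 0) :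
    QBf m n p i J r c = decide (r = m - i ∧ 2 ≤ i) := by
  simp [QBf, h1, h2, h3]

lemma pv_rev {m n : ℕ} (p : Fin m → Fin n → Bool) {i j : ℕ} (hi : i < m) (hj : j < n) {b : Bool}
    (h : pv m n p i j = b) : p ⟨i, hi⟩ ⟨j, hj⟩ = b :=
  (pv_spec p hi hj).trans h

lemma exists_i0 {m n : ℕ} (hm : 4 ≤ m) (hn : 4 ≤ n) {p : Fin m → Fin n → Bool}
    (hpX : p ∈ XSet m n) :
    ∃ i₀, 2 ≤ i₀ ∧ i₀ ≤ m - 2 ∧ pv m n p (i₀ - 1) (n - 1) = false := by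
  have hm0 : 0 < m := by omega
  have hn0 : 0 < n := by omega
  by_contra h
  push_neg at h
  have hone : ∀ r, 1 ≤ r → r ≤ m - 3 → pv m n p r (n - 1) = true := by
    intro r h1 h2
    have h3 := h (r + 1) (by omega) (by omega)
    have h4 : r + 1 - 1 = r := by omega
    rw [h4] at h3
    cases hb : pv m n p r (n - 1)
    · exact absurd hb h3
    · rfl
  obtain ⟨hs0, hsm, hsint, hsns⟩ := hpX.2.2.2 hn0
  have hr0 : pv m n p 0 (n - 1) = true :=
    pv_eq p 0 (n - 1) hm0 (by omega) (hpX.1 hm0 ⟨n - 1, by omega⟩)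
  have hsm' : pv m n p (m - 1) (n - 1) = false :=
    pv_eq p (m - 1) (n - 1) (by omega) (by omega) (hsm (by omega))
  cases hb : pv m n p (m - 2) (n - 1)
  · -- suffix 110^2
    apply hsns
    refine ⟨2, by omega, by omega, ?_, ?_, ?_⟩
    · intro h'
      refine pv_rev p h' (by omega) ?_
      have e : m - 2 - 2 = m - 4 := by omega
      rw [e]
      rcases Nat.eq_zero_or_pos (m - 4) with h4 | h4
      · rw [h4]; exact hr0
      · exact hone (m - 4) (by omega) (by omega)
    · intro h'
      refine pv_rev p h' (by omega) ?_
      have e : m - 2 - 1 = m - 3 := by omega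
      rw [e]
      exact hone (m - 3) (by omega) (by omega)
    · intro j hj hjm
      refine pv_rev p hjm (by omega) ?_
      rcases (by omega : j = m - 2 ∨ j = m - 1) with e | e
      · rw [e]; exact hb
      · rw [e]; exact hsm'
  · -- suffix 110^1
    apply hsns
    refine ⟨1, le_refl 1, by omega, ?_, ?_, ?_⟩
    · intro h'
      refine pv_rev p h' (by omega) ?_
      have e : m - 1 - 2 = m - 3 := by omega
      rw [e]
      exact hone (m - 3) (by omega) (by omega)
    · intro h'
      refine pv_rev p h' (by omega) ?_
      have e : m - 1 - 1 = m - 2 := by omega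
      rw [e]
      exact hb
    · intro j hj hjm
      refine pv_rev p hjm (by omega) ?_
      have e : j = m - 1 := by omega
      rw [e]
      exact hsm'

lemma caseA {m n : ℕ} (hm : 4 ≤ m) (hn : 4 ≤ n) (p : Fin m → Fin n → Bool)
    (hpX : p ∈ XSet m n) (hC1 : Cond1Viol m n p) :
    ∃ q ∈ YSet m n, Overlap m n p q := by
  have hm0 : 0 < m := by omega
  have hn0 : 0 < n := by omega
  have hr0 : ∀ j, j < n → pv m n p 0 j = true := fun j hj =>
    pv_eq p 0 j hm0 hj (hpX.1 hm0 ⟨j, hj⟩)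
  obtain ⟨J, hJn, hPJ, hmax⟩ := exists_max (b := n) (by
    obtain ⟨c, hc⟩ := (cond1_iff p).mp hC1
    exact ⟨c, hc.2.1, hc⟩)
  obtain ⟨hJ1, hJn', hJcol⟩ := hPJ
  obtain ⟨i₀, hi₀2, hi₀m, hi₀p⟩ := exists_i0 hm hn hpX
  refine ⟨QA m n p J i₀, ⟨⟨?_, ?_, ?_, ?_⟩, ?_, ?_⟩, m - 1, n - J,
    Or.inr (Or.inr (Or.inr ⟨by omega, by omega, by omega, by omega, ?_⟩))⟩
  · -- first row all ones
    intro h j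
    show QAf m n p J i₀ 0 j.val = true
    simp [QAf]
  · -- last row in S2
    intro h
    constructor
    · intro h'
      show QAf m n p J i₀ (m - 1) 0 = false
      rw [QAf_copy (by omega) (by omega)]
      rw [show m - 1 - 1 = m - 2 from by omega, Nat.add_zero]
      exact hJcol (m - 2) (by omega) (by omega)
    · intro h'
      show QAf m n p J i₀ (m - 1) (n - 1) = false
      rw [QAf_fill (by omega) (by omega)]
      have : ¬ (m - 1 = i₀) := by omega
      simp [this]
  · -- first column
    intro h ii
    have hIl := ii.isLt
    show QAf m n p J i₀ ii.val 0 = decide (ii.val < 2)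
    by_cases h0 : ii.val = 0
    · rw [h0]
      simp [QAf]
    · rw [QAf_copy h0 (by omega), Nat.add_zero]
      by_cases h1 : ii.val = 1
      · rw [h1]
        show pv m n p 0 J = decide (1 < 2)
        rw [hr0 J (by omega)]
        simp
      · rw [hJcol (ii.val - 1) (by omega) (by omega)]
        have : ¬ (ii.val < 2) := by omega
        simp [this]
  · -- last column in S4
    intro h
    refine ⟨?_, ?_, ⟨i₀, by omega, by omega, by omega, ?_⟩, ?_⟩
    · intro h'
      show QAf m n p J i₀ 0 (n - 1) = true
      simp [QAf]
    · intro h'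
      show QAf m n p J i₀ (m - 1) (n - 1) = false
      rw [QAf_fill (by omega) (by omega)]
      have : ¬ (m - 1 = i₀) := by omega
      simp [this]
    · show QAf m n p J i₀ i₀ (n - 1) = true
      rw [QAf_fill (by omega) (by omega)]
      simp
    · rintro ⟨k, hk1, hk2, hv1, hv2, hv3⟩
      have e1 : QAf m n p J i₀ (m - k - 2) (n - 1) = true := hv1 (by omega)
      have e2 : QAf m n p J i₀ (m - k - 1) (n - 1) = true := hv2 (by omega)
      rw [QAf_fill (by omega) (by omega)] at e2
      simp only [decide_eq_true_eq] at e2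
      have f1 : m - k - 2 = 0 ∨ m - k - 2 = i₀ := by
        by_cases h0 : m - k - 2 = 0
        · exact Or.inl h0
        · right
          rw [QAf_fill h0 (by omega)] at e1
          simpa using e1
      omega
  · -- ¬ Cond1Viol
    intro hcv
    obtain ⟨c, hc1, hcn, hall⟩ := (cond1_iff (QA m n p J i₀)).mp hcv
    by_cases hck : c < n - J
    · have h1 := hall 1 (le_refl 1) (by omega)
      rw [pv_QA 1 c (by omega) hcn, QAf_copy (by omega) hck] at h1
      rw [show (1 : ℕ) - 1 = 0 from rfl, hr0 (J + c) (by omega)] at h1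
      exact absurd h1 (by simp)
    · have h1 := hall i₀ (by omega) (by omega)
      rw [pv_QA i₀ c (by omega) hcn, QAf_fill (by omega) hck] at h1
      simp at h1
  · -- ¬ Cond2Viol
    intro hcv
    obtain ⟨c, hcn, i', hi'm, hne, hrow, hnext, hzer⟩ := (cond2_iff (QA m n p J i₀)).mp hcv
    have hlast := hrow (n - 1) (by omega) (by omega)
    rw [pv_QA i' (n - 1) (by omega) (by omega)] at hlast
    by_cases hi'0 : i' = 0
    · subst hi'0
      have hc1 : 1 ≤ c := by
        rcases Nat.eq_zero_or_pos c with h | h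
        · exact absurd ⟨rfl, h⟩ hne
        · exact h
      by_cases hck : c < n - J
      · refine hmax (J + c) (by omega) (by omega) ⟨by omega, by omega, fun r h1 h2 => ?_⟩
        have h3 := hzer (r + 1) (by omega) (by omega)
        rw [pv_QA (r + 1) c (by omega) hcn, QAf_copy (by omega) hck] at h3
        rw [show r + 1 - 1 = r from by omega] at h3
        exact h3
      · rw [pv_QA (0 + 1) c (by omega) hcn, QAf_fill (by omega) hck] at hnext
        simp only [decide_eq_true_eq] at hnext
        omega
    · rw [QAf_fill hi'0 (by omega)] at hlast
      have hii : i' = i₀ := by simpa using hlast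
      by_cases hck : c < n - J
      · have h1 := hrow (n - J - 1) (by omega) (by omega)
        rw [pv_QA i' (n - J - 1) (by omega) (by omega), QAf_copy hi'0 (by omega)] at h1
        rw [hii, show J + (n - J - 1) = n - 1 from by omega] at h1
        rw [hi₀p] at h1
        exact absurd h1 (by simp)
      · rw [pv_QA (i' + 1) c (by omega) hcn, QAf_fill (by omega) hck] at hnext
        simp only [decide_eq_true_eq] at hnext
        omega
  · -- overlap block
    intro r c hr hc hi' hj hi hj'
    show QAf m n p J i₀ (m - (m - 1) + r) c = _
    rw [show m - (m - 1) + r = r + 1 from by omega]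
    rw [QAf_copy (by omega) hc]
    rw [show r + 1 - 1 = r from by omega]
    rw [pv_spec p hi hj']
    rw [show n - (n - J) + c = J + c from by omega]

lemma caseB {m n : ℕ} (hm : 4 ≤ m) (hn : 4 ≤ n) (p : Fin m → Fin n → Bool)
    (hpX : p ∈ XSet m n) (hnc1 : ¬ Cond1Viol m n p) (hC2 : Cond2Viol m n p) :
    ∃ q ∈ YSet m n, Overlap m n p q := by
  have hm0 : 0 < m := by omega
  have hn0 : 0 < n := by omega
  have hr0 : ∀ j, j < n → pv m n p 0 j = true := fun j hj =>
    pv_eq p 0 j hm0 hj (hpX.1 hm0 ⟨j, hj⟩)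
  have hc0 : ∀ i', i' < m → pv m n p i' 0 = decide (i' < 2) := fun i' h =>
    pv_eq p i' 0 h hn0 (hpX.2.2.1 hn0 ⟨i', h⟩)
  have hlrn : pv m n p (m - 1) (n - 1) = false :=
    pv_eq p (m - 1) (n - 1) (by omega) (by omega) ((hpX.2.1 hm0).2 (by omega))
  obtain ⟨J, hJn, hPJ, hmax⟩ := exists_max (b := n) ((cond2_iff p).mp hC2)
  obtain ⟨i, him, hne, hrow, hnext, hzer⟩ := hPJ
  have hJ1 : 1 ≤ J := by
    by_contra hcon
    have hJ0 : J = 0 := by omega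
    subst hJ0
    have hi0 : i ≠ 0 := fun h' => hne ⟨h', rfl⟩
    have h1 : pv m n p i 0 = true := hrow 0 (le_refl 0) (by omega)
    have h2 := hc0 i (by omega)
    rw [h1] at h2
    have h3 : i < 2 := by simpa using h2.symm
    have h4 : i = 1 := by omega
    subst h4
    have h5 := hc0 2 (by omega)
    have h6 : pv m n p 2 0 = true := hnext
    rw [h6] at h5
    simp at h5
  have hi2m : i ≤ m - 2 := by omega
  refine ⟨QB m n p i J, ⟨⟨?_, ?_, ?_, ?_⟩, ?_, ?_⟩, m - i, n - J,
    Or.inr (Or.inl ⟨by omega, by omega, by omega, by omega, ?_⟩)⟩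
  · -- first row all ones
    intro h j
    show QBf m n p i J 0 j.val = true
    by_cases hc : j.val < n - J
    · rw [QBf_copy (by omega) hc, Nat.add_zero]
      exact hrow (J + j.val) (by omega) (by omega)
    · rw [QBf_last (by omega)]
      simp
  · -- last row in S2
    intro h
    constructor
    · intro h'
      show QBf m n p i J (m - 1) 0 = false
      by_cases hi0 : i = 0
      · rw [QBf_copy (by omega) (by omega), Nat.add_zero]
        rw [hi0, Nat.zero_add]
        exact hzer (m - 1) (by omega) (by omega)
      · exact QBf_zero (by omega) (by omega)
    · intro h'
      show QBf m n p i J (m - 1) (n - 1) = false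
      rw [QBf_last (by omega)]
      simp only [decide_eq_false_iff_not]
      omega
  · -- first column
    intro h ii
    have hIl := ii.isLt
    show QBf m n p i J ii.val 0 = decide (ii.val < 2)
    by_cases hr : ii.val < m - i
    · rw [QBf_copy hr (by omega), Nat.add_zero]
      by_cases h0 : ii.val = 0
      · rw [h0, Nat.add_zero, hrow J (le_refl J) (by omega)]
        simp
      · by_cases h1 : ii.val = 1
        · rw [h1, hnext]
          simp
        · rw [hzer (i + ii.val) (by omega) (by omega)]
          have : ¬ (ii.val < 2) := by omega
          simp [this]
    · rw [QBf_zero hr (by omega)]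
      have : ¬ (ii.val < 2) := by omega
      simp [this]
  · -- last column in S4
    intro h
    refine ⟨?_, ?_, ⟨2, by omega, by omega, by omega, ?_⟩, ?_⟩
    · intro h'
      show QBf m n p i J 0 (n - 1) = true
      rw [QBf_last (by omega)]
      simp
    · intro h'
      show QBf m n p i J (m - 1) (n - 1) = false
      rw [QBf_last (by omega)]
      simp only [decide_eq_false_iff_not]
      omega
    · show QBf m n p i J 2 (n - 1) = true
      rw [QBf_last (by omega)]
      simp
    · rintro ⟨k, hk1, hk2, hv1, hv2, hv3⟩
      have e1 : QBf m n p i J (m - k - 2) (n - 1) = true := hv1 (by omega)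
      have e2 : QBf m n p i J (m - k - 1) (n - 1) = true := hv2 (by omega)
      rw [QBf_last (by omega)] at e1 e2
      simp only [decide_eq_true_eq] at e1 e2
      omega
  · -- ¬ Cond1Viol
    intro hcv
    obtain ⟨c, hc1, hcn, hall⟩ := (cond1_iff (QB m n p i J)).mp hcv
    by_cases hck : c < n - J
    · by_cases hi0 : i = 0
      · apply hnc1
        refine (cond1_iff p).mpr ⟨J + c, by omega, by omega, fun r h1 h2 => ?_⟩
        have h3 := hall r h1 h2
        rw [pv_QB r c (by omega) hcn, QBf_copy (by omega) hck] at h3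
        rw [hi0, Nat.zero_add] at h3
        exact h3
      · by_cases hi1 : i = 1
        · refine hmax (J + c) (by omega) (by omega) ⟨0, by omega, by omega,
            fun c' h1 h2 => hr0 c' h2, ?_, ?_⟩
          · have h3 := hrow (J + c) (by omega) (by omega)
            rw [hi1] at h3
            exact h3
          · intro l h1 h2
            have h3 := hall (l - 1) (by omega) (by omega)
            rw [pv_QB (l - 1) c (by omega) hcn, QBf_copy (by omega) hck] at h3
            rw [hi1, show 1 + (l - 1) = l from by omega] at h3
            exact h3
        · have h3 := hall (m - i) (by omega) (by omega)
          rw [pv_QB (m - i) c (by omega) hcn, QBf_free (by omega) (by omega) (by omega)] at h3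
          simp at h3
          omega
    · have h3 := hall 2 (by omega) (by omega)
      rw [pv_QB 2 c (by omega) hcn, QBf_last (by omega)] at h3
      simp at h3
  · -- ¬ Cond2Viol
    intro hcv
    obtain ⟨c, hcn, i', hi'm, hne', hrow', hnext', hzer'⟩ := (cond2_iff (QB m n p i J)).mp hcv
    have hlast := hrow' (n - 1) (by omega) (by omega)
    rw [pv_QB i' (n - 1) (by omega) (by omega), QBf_last (by omega)] at hlast
    have hi'02 : i' = 0 ∨ i' = 2 := by simpa using hlast
    by_cases hck : c < n - J
    case neg =>
      rw [pv_QB (i' + 1) c (by omega) hcn, QBf_last (by omega)] at hnext'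
      simp only [decide_eq_true_eq] at hnext'
      omega
    case pos =>
      rcases hi'02 with hi'0 | hi'2
      · subst hi'0
        have hc1 : 1 ≤ c := by
          rcases Nat.eq_zero_or_pos c with h | h
          · exact absurd ⟨rfl, h⟩ hne'
          · exact h
        by_cases hi0 : i = 0
        · refine hmax (J + c) (by omega) (by omega) ⟨0, by omega, by omega,
            fun c' h1 h2 => hr0 c' h2, ?_, ?_⟩
          · rw [pv_QB (0 + 1) c (by omega) hcn, QBf_copy (by omega) hck] at hnext'
            rw [hi0] at hnext'
            exact hnext'
          · intro l h1 h2
            have h3 := hzer' l (by omega) h2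
            rw [pv_QB l c h2 hcn, QBf_copy (by omega) hck] at h3
            rw [hi0, Nat.zero_add] at h3
            exact h3
        · by_cases hi1 : i = 1
          · refine hmax (J + c) (by omega) (by omega) ⟨1, by omega, by omega, ?_, ?_, ?_⟩
            · intro c' h1 h2
              have h3 := hrow c' (by omega) h2
              rw [hi1] at h3
              exact h3
            · rw [pv_QB (0 + 1) c (by omega) hcn, QBf_copy (by omega) hck] at hnext'
              rw [hi1] at hnext'
              exact hnext'
            · intro l h1 h2
              have h3 := hzer' (l - 1) (by omega) (by omega)
              rw [pv_QB (l - 1) c (by omega) hcn, QBf_copy (by omega) hck] at h3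
              rw [hi1, show 1 + (l - 1) = l from by omega] at h3
              exact h3
          · have h3 := hzer' (m - i) (by omega) (by omega)
            rw [pv_QB (m - i) c (by omega) hcn, QBf_free (by omega) (by omega) (by omega)] at h3
            simp at h3
            omega
      · subst hi'2
        by_cases hc0' : c = 0
        · subst hc0'
          rw [pv_QB (2 + 1) 0 (by omega) hcn] at hnext'
          by_cases h3 : 2 + 1 < m - i
          · rw [QBf_copy h3 (by omega)] at hnext'
            have h6 : pv m n p (i + 3) J = true := hnext'
            rw [hzer (i + 3) (by omega) (by omega)] at h6
            exact absurd h6 (by simp)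
          · rw [QBf_zero h3 (by omega)] at hnext'
            exact absurd hnext' (by simp)
        · by_cases hi0 : i = 0
          · refine hmax (J + c) (by omega) (by omega) ⟨2, by omega, by omega, ?_, ?_, ?_⟩
            · intro c' h1 h2
              have h3 := hrow' (c' - J) (by omega) (by omega)
              rw [pv_QB 2 (c' - J) (by omega) (by omega), QBf_copy (by omega) (by omega)] at h3
              rw [hi0, Nat.zero_add, show J + (c' - J) = c' from by omega] at h3
              exact h3
            · rw [pv_QB (2 + 1) c (by omega) hcn, QBf_copy (by omega) hck] at hnext'
              rw [hi0, Nat.zero_add] at hnext'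
              exact hnext'
            · intro l h1 h2
              have h3 := hzer' l (by omega) h2
              rw [pv_QB l c h2 hcn, QBf_copy (by omega) hck] at h3
              rw [hi0, Nat.zero_add] at h3
              exact h3
          · by_cases hi1 : i = 1
            · by_cases hm5 : 5 ≤ m
              · refine hmax (J + c) (by omega) (by omega) ⟨3, by omega, by omega, ?_, ?_, ?_⟩
                · intro c' h1 h2
                  have h3 := hrow' (c' - J) (by omega) (by omega)
                  rw [pv_QB 2 (c' - J) (by omega) (by omega), QBf_copy (by omega) (by omega)] at h3
                  rw [hi1, show J + (c' - J) = c' from by omega] at h3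
                  exact h3
                · rw [pv_QB (2 + 1) c (by omega) hcn, QBf_copy (by omega) hck] at hnext'
                  rw [hi1] at hnext'
                  exact hnext'
                · intro l h1 h2
                  have h3 := hzer' (l - 1) (by omega) (by omega)
                  rw [pv_QB (l - 1) c (by omega) hcn, QBf_copy (by omega) hck] at h3
                  rw [hi1, show 1 + (l - 1) = l from by omega] at h3
                  exact h3
              · rw [pv_QB (2 + 1) c (by omega) hcn, QBf_free (by omega) (by omega) hc0'] at hnext'
                simp only [decide_eq_true_eq] at hnext'
                omega
            · by_cases hh2 : m - i = 2
              · rw [pv_QB (2 + 1) c (by omega) hcn, QBf_free (by omega) (by omega) hc0'] at hnext'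
                simp only [decide_eq_true_eq] at hnext'
                omega
              · by_cases hh3 : m - i = 3
                · have h3 := hrow' (n - J - 1) (by omega) (by omega)
                  rw [pv_QB 2 (n - J - 1) (by omega) (by omega),
                    QBf_copy (by omega) (by omega)] at h3
                  rw [show i + 2 = m - 1 from by omega,
                    show J + (n - J - 1) = n - 1 from by omega] at h3
                  rw [hlrn] at h3
                  exact absurd h3 (by simp)
                · have h3 := hzer' (m - i) (by omega) (by omega)
                  rw [pv_QB (m - i) c (by omega) hcn,
                    QBf_free (by omega) (by omega) (by omega)] at h3
                  simp at h3
                  omega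
  · -- overlap block
    intro r c hr hc hi_ hj_ hi'_ hj'_
    show QBf m n p i J r c = _
    rw [QBf_copy hr hc]
    rw [pv_spec p hi'_ hj'_]
    rw [show m - (m - i) + r = i + r from by omega, show n - (n - J) + c = J + c from by omega]

/-- Every picture of X(m,n) \ Y(m,n) overlaps some picture of Y(m,n). -/
theorem stmt12 (m n : ℕ) (hm : 4 ≤ m) (hn : 4 ≤ n) :
    ∀ p ∈ XSet m n, p ∉ YSet m n → ∃ q ∈ YSet m n, Overlap m n p q := by
  intro p hpX hpY
  by_cases h1 : Cond1Viol m n p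
  · exact caseA hm hn p hpX h1
  · by_cases h2 : Cond2Viol m n p
    · exact caseB hm hn p hpX h1 h2
    · exact absurd ⟨hpX, h1, h2⟩ hpY

end Neno
end
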